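/- arXiv:2603.23778 — 6 statements merged into one kernel-verified Lean document; each statement's English description precedes it below -/
import Mathlib

section
/- Let d ≥ 1 and let A be a d × d matrix with integer entries. Then the characteristic polynomial of A is irreducible in ℤ[X] if and only if every nonzero integer vector n ∈ ℤ^d is cyclic for A, i.e. the vectors n, A·n, A²·n, …, A^{d−1}·n (regarded as vectors of ℚ^d) span ℚ^d over ℚ. -/
open Polynomial Matrix

private lemma aeval_mulVec_eq_sum {d n : ℕ} (B : Matrix (Fin d) (Fin d) ℚ) (v : Fin d → ℚ)
    (p : ℚ[X]) (hn : p.natDegree < n) :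
    (Polynomial.aeval B p).mulVec v = ∑ i ∈ Finset.range n, p.coeff i • (B ^ i).mulVec v := by
  rw [Polynomial.aeval_eq_sum_range' hn]
  rw [show (∑ i ∈ Finset.range n, p.coeff i • B ^ i).mulVec v
      = Matrix.mulVec.addMonoidHomLeft v (∑ i ∈ Finset.range n, p.coeff i • B ^ i) from rfl,
    map_sum]
  refine Finset.sum_congr rfl fun i _ => ?_
  show (p.coeff i • B ^ i) *ᵥ v = _
  exact Matrix.smul_mulVec _ _ _

private lemma indep_of_irred {d : ℕ} (B : Matrix (Fin d) (Fin d) ℚ)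
    (hirr : Irreducible B.charpoly) (v : Fin d → ℚ) (hv : v ≠ 0) :
    LinearIndependent ℚ (fun i : Fin d => (B ^ (i : ℕ)).mulVec v) := by
  rw [Fintype.linearIndependent_iff]
  intro g hg
  by_contra hne
  push_neg at hne
  obtain ⟨j, hj⟩ := hne
  set p : ℚ[X] := ∑ i : Fin d, Polynomial.C (g i) * Polynomial.X ^ (i : ℕ) with hp
  have hcoeff : ∀ k : Fin d, p.coeff (k : ℕ) = g k := by
    intro k
    simp only [hp, Polynomial.finset_sum_coeff, Polynomial.coeff_C_mul,
      Polynomial.coeff_X_pow]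
    rw [Finset.sum_eq_single k]
    · simp
    · intro i _ hik
      have : ¬ ((k : ℕ) = (i : ℕ)) := fun h => hik (Fin.ext h.symm)
      simp [this]
    · intro h; exact absurd (Finset.mem_univ k) h
  have hp0 : p ≠ 0 := by
    intro h
    exact hj (by rw [← hcoeff j, h, Polynomial.coeff_zero])
  have hdegd : p.degree < (d : ℕ) := by
    apply lt_of_le_of_lt (Polynomial.degree_sum_le _ _)
    rw [Finset.sup_lt_iff (by exact_mod_cast WithBot.bot_lt_coe d)]
    intro i _
    refine lt_of_le_of_lt (Polynomial.degree_C_mul_X_pow_le _ _) ?_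
    exact_mod_cast i.isLt
  have hdeg : p.natDegree < d := (Polynomial.natDegree_lt_iff_degree_lt hp0).mpr hdegd
  have haev : (Polynomial.aeval B p).mulVec v = 0 := by
    rw [aeval_mulVec_eq_sum B v p hdeg, ← Fin.sum_univ_eq_sum_range
      (fun i => p.coeff i • (B ^ i).mulVec v) d, ← hg]
    exact Finset.sum_congr rfl fun i _ => by rw [hcoeff]
  have hndvd : ¬ B.charpoly ∣ p := by
    intro hdvd
    refine hp0 (Polynomial.eq_zero_of_dvd_of_natDegree_lt hdvd ?_)
    rwa [Matrix.charpoly_natDegree_eq_dim, Fintype.card_fin]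
  obtain ⟨a, b, hab⟩ := hirr.coprime_iff_not_dvd.mpr hndvd
  apply hv
  have h1 : v = (Polynomial.aeval B (a * B.charpoly + b * p)).mulVec v := by
    rw [hab, _root_.map_one, Matrix.one_mulVec]
  rwa [map_add, _root_.map_mul, _root_.map_mul, Matrix.aeval_self_charpoly, mul_zero, zero_add,
    ← Matrix.mulVec_mulVec, haev, Matrix.mulVec_zero] at h1

private lemma bad_of_not_irred {d : ℕ} (hd : 1 ≤ d) (B : Matrix (Fin d) (Fin d) ℚ)
    (hnot : ¬ Irreducible B.charpoly) :
    ∃ v : Fin d → ℚ, v ≠ 0 ∧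
      ¬ LinearIndependent ℚ (fun i : Fin d => (B ^ (i : ℕ)).mulVec v) := by
  have hmon : B.charpoly.Monic := Matrix.charpoly_monic B
  have hcpne : B.charpoly ≠ 0 := hmon.ne_zero
  have hdeg : B.charpoly.natDegree = d := by
    rw [Matrix.charpoly_natDegree_eq_dim, Fintype.card_fin]
  have hnu : ¬ IsUnit B.charpoly :=
    Polynomial.not_isUnit_of_natDegree_pos _ (by omega)
  rw [irreducible_iff] at hnot
  push_neg at hnot
  obtain ⟨p, q, hpq, hp, hq⟩ := hnot hnu
  have hpne : p ≠ 0 := by rintro rfl; rw [zero_mul] at hpq; exact hcpne hpq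
  have hqne : q ≠ 0 := by rintro rfl; rw [mul_zero] at hpq; exact hcpne hpq
  have hppos : 0 < p.natDegree := Nat.pos_of_ne_zero fun h =>
    hp (Polynomial.isUnit_iff_degree_eq_zero.mpr
      (by rw [Polynomial.degree_eq_natDegree hpne, h]; rfl))
  have hqpos : 0 < q.natDegree := Nat.pos_of_ne_zero fun h =>
    hq (Polynomial.isUnit_iff_degree_eq_zero.mpr
      (by rw [Polynomial.degree_eq_natDegree hqne, h]; rfl))
  have hsum : p.natDegree + q.natDegree = d := by
    rw [← Polynomial.natDegree_mul hpne hqne, ← hpq, hdeg]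
  obtain ⟨v, hv, r, hrne, hrdeg, hrv⟩ :
      ∃ v : Fin d → ℚ, v ≠ 0 ∧ ∃ r : ℚ[X], r ≠ 0 ∧ r.natDegree < d ∧
        (Polynomial.aeval B r).mulVec v = 0 := by
    by_cases hqz : Polynomial.aeval B q = 0
    · refine ⟨Pi.single ⟨0, hd⟩ 1, ?_, q, hqne, by omega,
        by rw [hqz, Matrix.zero_mulVec]⟩
      intro h
      have := congrFun h ⟨0, hd⟩
      simp [Pi.single_eq_same] at this
    · have hex : ∃ w : Fin d → ℚ, (Polynomial.aeval B q).mulVec w ≠ 0 := by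
        by_contra hall
        push_neg at hall
        apply hqz
        ext i j
        have h2 := congrFun (hall (Pi.single j 1)) i
        rw [Matrix.mulVec_single] at h2
        simpa using h2
      obtain ⟨w, hw⟩ := hex
      refine ⟨(Polynomial.aeval B q).mulVec w, hw, p, hpne, by omega, ?_⟩
      rw [Matrix.mulVec_mulVec, ← _root_.map_mul, ← hpq, Matrix.aeval_self_charpoly,
        Matrix.zero_mulVec]
  refine ⟨v, hv, fun hind => ?_⟩
  have hdep : ∑ i : Fin d, r.coeff (i : ℕ) • (B ^ (i : ℕ)).mulVec v = 0 := by
    rw [Fin.sum_univ_eq_sum_range (fun i => r.coeff i • (B ^ i).mulVec v) d,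
      ← aeval_mulVec_eq_sum B v r hrdeg, hrv]
  have hlc := Fintype.linearIndependent_iff.mp hind (fun i => r.coeff (i : ℕ)) hdep
    ⟨r.natDegree, hrdeg⟩
  exact Polynomial.leadingCoeff_ne_zero.mpr hrne hlc

theorem stmt_6 (d : ℕ) (hd : 1 ≤ d) (A : Matrix (Fin d) (Fin d) ℤ) :
    Irreducible (Matrix.charpoly A) ↔
      ∀ n : Fin d → ℤ, n ≠ 0 →
        Submodule.span ℚ
          (Set.range fun i : Fin d =>
            ((A.map (Int.cast : ℤ → ℚ)) ^ (i : ℕ)).mulVec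
              (fun j => (n j : ℚ))) = ⊤ := by
  set B : Matrix (Fin d) (Fin d) ℚ := A.map (Int.cast : ℤ → ℚ) with hB
  have hmapc : B.charpoly = A.charpoly.map (Int.castRingHom ℚ) :=
    Matrix.charpoly_map A (Int.castRingHom ℚ)
  have hGauss : Irreducible A.charpoly ↔ Irreducible B.charpoly := by
    rw [hmapc]
    have h := (Matrix.charpoly_monic A).irreducible_iff_irreducible_map_fraction_map (K := ℚ)
    rwa [algebraMap_int_eq] at h
  constructor
  · intro hirr n hn
    have hBirr := hGauss.mp hirr
    have hv : (fun j => ((n j : ℚ))) ≠ 0 := by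
      intro h; apply hn; funext j
      have h2 := congrFun h j
      rw [Pi.zero_apply] at h2
      exact_mod_cast h2
    have hind := indep_of_irred B hBirr _ hv
    have : Nonempty (Fin d) := ⟨⟨0, hd⟩⟩
    exact hind.span_eq_top_of_card_eq_finrank (by simp)
  · intro h
    by_contra hnirr
    obtain ⟨v, hv, hnind⟩ := bad_of_not_irred hd B (fun hh => hnirr (hGauss.mpr hh))
    apply hnind
    set c : ℤ := ∏ j, ((v j).den : ℤ) with hc
    have hcpos : 0 < c := Finset.prod_pos fun j _ => by exact_mod_cast (v j).pos
    set n : Fin d → ℤ := fun j => (v j).num * (c / ((v j).den : ℤ)) with hn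
    have hcast : ∀ j, ((n j : ℚ)) = (c : ℚ) * v j := by
      intro j
      obtain ⟨k, hk⟩ : ((v j).den : ℤ) ∣ c := Finset.dvd_prod_of_mem _ (Finset.mem_univ j)
      have hdz : ((v j).den : ℤ) ≠ 0 := by exact_mod_cast (v j).den_nz
      show ((((v j).num * (c / ((v j).den : ℤ)) : ℤ)) : ℚ) = (c : ℚ) * v j
      rw [hk, Int.mul_ediv_cancel_left _ hdz]
      have hnum : ((v j).num : ℚ) = v j * ((v j).den : ℚ) := by
        exact_mod_cast (Rat.mul_den_eq_num (v j)).symm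
      push_cast
      rw [hnum]; ring
    have hn0 : n ≠ 0 := by
      obtain ⟨j, hj⟩ := Function.ne_iff.mp hv
      intro hzero
      apply hj
      have h1 : ((n j : ℚ)) = 0 := by
        rw [congrFun hzero j, Pi.zero_apply, Int.cast_zero]
      rw [hcast j] at h1
      rcases mul_eq_zero.mp h1 with h2 | h2
      · exact absurd h2 (by exact_mod_cast hcpos.ne')
      · exact h2
    have hspan := h n hn0
    have hfun : (fun j => ((n j : ℚ))) = (c : ℚ) • v := by
      funext j; rw [hcast j]; rfl
    rw [hfun] at hspan
    have htop : ⊤ ≤ Submodule.span ℚ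
        (Set.range fun i : Fin d => (B ^ (i : ℕ)).mulVec v) := by
      rw [← hspan]
      apply Submodule.span_le.mpr
      rintro x ⟨i, rfl⟩
      show B ^ (i : ℕ) *ᵥ (c : ℚ) • v ∈ _
      rw [Matrix.mulVec_smul]
      exact Submodule.smul_mem _ _ (Submodule.subset_span ⟨i, rfl⟩)
    exact linearIndependent_of_top_le_span_of_card_eq_finrank htop (by simp)
end

section
/- Let p ∈ ℤ[X] be a monic irreducible polynomial with constant term p(0) = 1 of degree n, and suppose p has a complex root ξ with |ξ| = 1 that is not a root of unity. Then n is even, p is a reciprocal polynomial (its coefficients satisfy coeff(p, i) = coeff(p, n − i) for all 0 ≤ i ≤ n, equivalently p(x) = xⁿ·p(1/x)), and p has a complex root of modulus strictly less than 1 and a complex root of modulus strictly greater than 1. -/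
open Polynomial

set_option maxHeartbeats 1000000 in
theorem stmt_7 (p : Polynomial ℤ) (hmonic : p.Monic) (hirr : Irreducible p)
    (hconst : p.coeff 0 = 1) (n : ℕ) (hn : n = p.natDegree)
    (ξ : ℂ) (hroot : Polynomial.aeval ξ p = 0) (hmod : ‖ξ‖ = 1)
    (hnotunit : ¬∃ m : ℕ, 1 ≤ m ∧ ξ ^ m = 1) :
    Even n ∧ (∀ i ≤ n, p.coeff i = p.coeff (n - i)) ∧
      (∃ z : ℂ, Polynomial.aeval z p = 0 ∧ ‖z‖ < 1) ∧
      (∃ z : ℂ, Polynomial.aeval z p = 0 ∧ 1 < ‖z‖) := by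
  have hξ0 : ξ ≠ 0 := by
    intro h; rw [h] at hmod; simp at hmod
  have hξint : IsIntegral ℤ ξ := ⟨p, hmonic, by rwa [aeval_def] at hroot⟩
  have hpmin : p = minpoly ℤ ξ := by
    obtain ⟨c, hc⟩ := minpoly.isIntegrallyClosed_dvd hξint hroot
    rcases hirr.isUnit_or_isUnit hc with h | h
    · exact absurd h (minpoly.not_isUnit ℤ ξ)
    · refine (eq_of_monic_of_associated (minpoly.monic hξint) hmonic ⟨h.unit, ?_⟩).symm
      rw [IsUnit.unit_spec, ← hc]
  -- conjugate root
  have hconj : Polynomial.aeval ((starRingEnd ℂ) ξ) p = 0 := by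
    have h := Polynomial.aeval_algHom_apply (starRingEnd ℂ).toIntAlgHom ξ p
    simp only [RingHom.toIntAlgHom_coe] at h
    rw [h, hroot, map_zero]
  have hinvroot : Polynomial.aeval ξ⁻¹ p = 0 := by
    rw [Complex.inv_eq_conj hmod]; exact hconj
  -- p is reciprocal: reverse p = p
  have htd : p.natTrailingDegree = 0 :=
    Polynomial.natTrailingDegree_eq_zero.mpr (Or.inr (by rw [hconst]; exact one_ne_zero))
  have hrevdeg : p.reverse.natDegree = p.natDegree := by
    rw [Polynomial.reverse_natDegree, htd, Nat.sub_zero]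
  have hrevlead : p.reverse.leadingCoeff = 1 := by
    rw [Polynomial.reverse_leadingCoeff, Polynomial.trailingCoeff, htd, hconst]
  have hrevroot : Polynomial.aeval ξ p.reverse = 0 := by
    letI : Invertible (ξ⁻¹ : ℂ) := invertibleOfNonzero (inv_ne_zero hξ0)
    have h2 := eval₂_reverse_eq_zero_iff (algebraMap ℤ ℂ) ξ⁻¹ p
    have hinv : (⅟ (ξ⁻¹) : ℂ) = ξ := invOf_eq_right_inv (inv_mul_cancel₀ hξ0)
    rw [hinv] at h2
    rw [aeval_def]
    rw [aeval_def] at hinvroot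
    exact h2.mpr hinvroot
  have hdvd : p ∣ p.reverse := by
    have h := minpoly.isIntegrallyClosed_dvd hξint hrevroot
    rwa [← hpmin] at h
  have hrev : p = p.reverse :=
    Polynomial.eq_of_dvd_of_natDegree_le_of_leadingCoeff hdvd hrevdeg.le
      (by rw [hmonic.leadingCoeff, hrevlead])
  have hcoeffs : ∀ i ≤ n, p.coeff i = p.coeff (n - i) := by
    intro i hi
    conv_lhs => rw [hrev]
    rw [Polynomial.coeff_reverse, ← hn, Polynomial.revAt_le hi]
  -- inverse of any nonzero root is a root
  have heval : ∀ z : ℂ, z ≠ 0 → Polynomial.aeval z p = 0 → Polynomial.aeval z⁻¹ p = 0 := by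
    intro z hz h
    letI : Invertible z := invertibleOfNonzero hz
    have h2 := eval₂_reverse_eq_zero_iff (algebraMap ℤ ℂ) z p
    rw [← hrev] at h2
    have hinv : (⅟ z : ℂ) = z⁻¹ := invOf_eq_right_inv (mul_inv_cancel₀ hz)
    rw [hinv] at h2
    rw [aeval_def] at h ⊢
    exact h2.mpr h
  -- n is even
  have heven : Even n := by
    by_contra hodd
    rw [Nat.not_even_iff_odd] at hodd
    have hm1 : p.eval (-1) = 0 := by
      letI : Invertible (-1 : ℤ) := ⟨-1, by norm_num, by norm_num⟩
      have h := eval₂_reverse_mul_pow (RingHom.id ℤ) (-1) p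
      have hinv : (⅟ (-1 : ℤ)) = -1 := invOf_eq_right_inv (by norm_num)
      rw [hinv, ← hrev, ← hn, hodd.neg_one_pow] at h
      rw [show (Polynomial.eval (-1 : ℤ) p) = eval₂ (RingHom.id ℤ) (-1) p from rfl]
      set e := eval₂ (RingHom.id ℤ) (-1 : ℤ) p with he
      linarith [h]
    have hdvd1 : (X - C (-1 : ℤ)) ∣ p := Polynomial.dvd_iff_isRoot.mpr hm1
    obtain ⟨c, hc⟩ := hdvd1
    rcases hirr.isUnit_or_isUnit hc with h | h
    · exact Polynomial.not_isUnit_X_sub_C (-1 : ℤ) h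
    · have hpeq : X - C (-1 : ℤ) = p :=
        eq_of_monic_of_associated (monic_X_sub_C _) hmonic
          ⟨h.unit, by rw [IsUnit.unit_spec, ← hc]⟩
      rw [← hpeq] at hroot
      simp only [map_sub, aeval_X, aeval_C, sub_eq_zero] at hroot
      refine hnotunit ⟨2, by norm_num, ?_⟩
      rw [hroot]
      push_cast
      ring
  -- there is a root off the unit circle
  have hzneq : ∃ z : ℂ, Polynomial.aeval z p = 0 ∧ ‖z‖ ≠ 1 := by
    by_contra hall
    push_neg at hall
    have hξQ : IsIntegral ℚ ξ := hξint.tower_top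
    let K := IntermediateField.adjoin ℚ ({ξ} : Set ℂ)
    haveI : FiniteDimensional ℚ K := IntermediateField.adjoin.finiteDimensional hξQ
    haveI : NumberField K := ⟨⟩
    set x : K := ⟨ξ, IntermediateField.mem_adjoin_simple_self ℚ ξ⟩ with hxdef
    have h1 : algebraMap K ℂ x = ξ := rfl
    have hxint : IsIntegral ℤ x := by
      rw [← isIntegral_algebraMap_iff (B := ℂ) (algebraMap K ℂ).injective, h1]
      exact hξint
    have hx : Polynomial.aeval x p = 0 := by
      have h2 := Polynomial.aeval_algebraMap_apply ℂ x p
      rw [h1, hroot] at h2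
      exact (map_eq_zero_iff _ (algebraMap K ℂ).injective).mp h2.symm
    have hnorm : ∀ φ : K →+* ℂ, ‖φ x‖ = 1 := by
      intro φ
      have h3 := Polynomial.aeval_algHom_apply φ.toIntAlgHom x p
      simp only [RingHom.toIntAlgHom_coe] at h3
      rw [hx, map_zero] at h3
      exact hall (φ x) h3
    obtain ⟨m, hm, hxm⟩ := NumberField.Embeddings.pow_eq_one_of_norm_eq_one K ℂ hxint hnorm
    refine hnotunit ⟨m, hm, ?_⟩
    have h4 : algebraMap K ℂ (x ^ m) = 1 := by rw [hxm, map_one]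
    rwa [map_pow, h1] at h4
  obtain ⟨z, hz, hz1⟩ := hzneq
  have hz0 : z ≠ 0 := by
    intro h
    rw [h, aeval_def, eval₂_at_zero, hconst] at hz
    simp at hz
  have hzpos : 0 < ‖z‖ := norm_pos_iff.mpr hz0
  rcases lt_or_gt_of_ne hz1 with hlt | hgt
  · refine ⟨heven, hcoeffs, ⟨z, hz, hlt⟩, ⟨z⁻¹, heval z hz0 hz, ?_⟩⟩
    rw [norm_inv]
    exact (one_lt_inv₀ hzpos).mpr hlt
  · refine ⟨heven, hcoeffs, ⟨z⁻¹, heval z hz0 hz, ?_⟩, ⟨z, hz, hgt⟩⟩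
    rw [norm_inv]
    exact inv_lt_one_of_one_lt₀ hgt
end

section
/- Let p ∈ ℤ[X] be a monic irreducible polynomial with constant term p(0) = 1, and suppose p has a complex root ξ with |ξ| = 1 that is not a root of unity. Then the degree of p is even and at least 4. -/
open Polynomial

theorem stmt_8 (p : Polynomial ℤ) (hmonic : p.Monic) (hirr : Irreducible p)
    (hconst : p.coeff 0 = 1)
    (ξ : ℂ) (hroot : Polynomial.aeval ξ p = 0) (hmod : ‖ξ‖ = 1)
    (hnotunit : ¬∃ m : ℕ, 1 ≤ m ∧ ξ ^ m = 1) :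
    Even p.natDegree ∧ 4 ≤ p.natDegree := by
  have hξ0 : ξ ≠ 0 := by
    intro h; rw [h] at hmod; simp at hmod
  letI : Invertible ξ := invertibleOfNonzero hξ0
  have h1 : ξ * (starRingEnd ℂ) ξ = 1 := by
    rw [Complex.mul_conj]; norm_cast
    rw [Complex.normSq_eq_norm_sq, hmod]; norm_num
  have hconj : (starRingEnd ℂ) ξ = ξ⁻¹ := eq_inv_of_mul_eq_one_left (by rw [mul_comm] at h1; exact h1)
  -- conjugate root
  have hrootc : Polynomial.aeval (ξ⁻¹) p = 0 := by
    rw [← hconj]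
    have := Polynomial.aeval_algHom_apply ((starRingEnd ℂ).toIntAlgHom) ξ p
    simpa [hroot] using this
  -- trailing degree zero
  have hTD : p.natTrailingDegree = 0 :=
    Polynomial.natTrailingDegree_eq_zero.mpr (Or.inr (by rw [hconst]; norm_num))
  -- reverse polynomial
  have hqmon : p.reverse.Monic := by
    unfold Polynomial.Monic
    rw [Polynomial.reverse_leadingCoeff, Polynomial.trailingCoeff, hTD, hconst]
  have hqdeg : p.reverse.natDegree = p.natDegree := by
    rw [Polynomial.reverse_natDegree, hTD]; omega
  have hqroot : Polynomial.aeval (ξ⁻¹) p.reverse = 0 := by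
    have := (Polynomial.eval₂_reverse_eq_zero_iff (algebraMap ℤ ℂ) ξ p).mpr (by rwa [Polynomial.aeval_def] at hroot)
    rwa [invOf_eq_inv, ← Polynomial.aeval_def] at this
  -- pass to ℚ
  have hPirr : Irreducible (p.map (Int.castRingHom ℚ)) :=
    (Polynomial.IsPrimitive.Int.irreducible_iff_irreducible_map_cast hmonic.isPrimitive).mp hirr
  have hPmon : (p.map (Int.castRingHom ℚ)).Monic := hmonic.map _
  have hQmon : (p.reverse.map (Int.castRingHom ℚ)).Monic := hqmon.map _
  have hcast : (Int.castRingHom ℚ) = algebraMap ℤ ℚ := rfl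
  have hProot : Polynomial.aeval (ξ⁻¹) (p.map (Int.castRingHom ℚ)) = 0 := by
    rw [hcast, Polynomial.aeval_map_algebraMap]; exact hrootc
  have hQroot : Polynomial.aeval (ξ⁻¹) (p.reverse.map (Int.castRingHom ℚ)) = 0 := by
    rw [hcast, Polynomial.aeval_map_algebraMap]; exact hqroot
  have hminp : p.map (Int.castRingHom ℚ) = minpoly ℚ (ξ⁻¹) :=
    minpoly.eq_of_irreducible_of_monic hPirr hProot hPmon
  have hdvd : p.map (Int.castRingHom ℚ) ∣ p.reverse.map (Int.castRingHom ℚ) := by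
    rw [hminp]; exact minpoly.dvd ℚ _ hQroot
  have hdegle : (p.reverse.map (Int.castRingHom ℚ)).natDegree ≤ (p.map (Int.castRingHom ℚ)).natDegree := by
    rw [hqmon.natDegree_map, hmonic.natDegree_map, hqdeg]
  have hQP : p.reverse.map (Int.castRingHom ℚ) = p.map (Int.castRingHom ℚ) :=
    Polynomial.eq_of_monic_of_dvd_of_natDegree_le hPmon hQmon hdvd hdegle
  have hrev : p.reverse = p :=
    Polynomial.map_injective (Int.castRingHom ℚ) Int.cast_injective hQP
  -- natDegree positive
  have hn0 : p.natDegree ≠ 0 := by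
    intro h
    have : p = 1 := hmonic.natDegree_eq_zero.mp h
    rw [this] at hirr
    exact not_irreducible_one hirr
  -- Even
  have heven : Even p.natDegree := by
    by_contra hodd
    rw [Nat.not_even_iff_odd] at hodd
    letI : Invertible (-1 : ℤ) := ⟨-1, by norm_num, by norm_num⟩
    have hinv : (⅟(-1 : ℤ)) = -1 := invOf_eq_right_inv (by norm_num)
    have hkey := Polynomial.eval₂_reverse_mul_pow (RingHom.id ℤ) (-1 : ℤ) p
    rw [hrev, hinv] at hkey
    have hkey2 : p.eval (-1 : ℤ) * (-1) ^ p.natDegree = p.eval (-1 : ℤ) := hkey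
    rw [hodd.neg_one_pow] at hkey2
    have hroot1 : p.eval (-1 : ℤ) = 0 := by linarith
    have hdvd1 : (X - C (-1 : ℤ)) ∣ p := Polynomial.dvd_iff_isRoot.mpr hroot1
    obtain ⟨c, hc⟩ := hdvd1
    have hcu : IsUnit c := (hirr.isUnit_or_isUnit hc).resolve_left (Polynomial.not_isUnit_X_sub_C _)
    have hcne : c ≠ 0 := fun h => by simp [h] at hc; exact hmonic.ne_zero hc
    have hdeg1 : p.natDegree = 1 := by
      rw [hc, Polynomial.natDegree_mul (Polynomial.X_sub_C_ne_zero _) hcne,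
        Polynomial.natDegree_X_sub_C, Polynomial.natDegree_eq_zero_of_isUnit hcu]
    have hp1 : p = X + C 1 := by
      rw [hmonic.eq_X_add_C hdeg1, hconst]
    rw [hp1] at hroot
    simp at hroot
    have : ξ = -1 := by linear_combination hroot
    exact hnotunit ⟨2, by norm_num, by rw [this]; ring⟩
  -- rule out degree 2
  have hn2 : p.natDegree ≠ 2 := by
    intro h2
    have hc2 : p.coeff 2 = 1 := by
      have := hmonic.coeff_natDegree
      rwa [h2] at this
    set b : ℤ := p.coeff 1 with hb
    have hquad : ξ ^ 2 + (b : ℂ) * ξ + 1 = 0 := by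
      have hs := Polynomial.aeval_eq_sum_range (R := ℤ) (S := ℂ) (p := p) ξ
      rw [h2, hroot] at hs
      rw [Finset.sum_range_succ, Finset.sum_range_succ, Finset.sum_range_one] at hs
      rw [hconst, hc2, ← hb] at hs
      simp only [zsmul_eq_mul] at hs
      push_cast at hs
      linear_combination -hs
    -- bound on b
    have hbC : (b : ℂ) = -(ξ + ξ⁻¹) := by
      have : (b : ℂ) * ξ = -(ξ ^ 2 + 1) := by linear_combination hquad
      field_simp at this ⊢
      linear_combination this
    have hbre : (b : ℝ) = -(2 * ξ.re) := by
      rw [← hconj] at hbC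
      have := congrArg Complex.re hbC
      simp at this
      linarith
    have habs : |(b : ℝ)| ≤ 2 := by
      rw [hbre, abs_neg]
      have := Complex.abs_re_le_norm ξ
      rw [hmod] at this
      rw [abs_mul]
      simp only [abs_two]
      nlinarith [abs_nonneg ξ.re]
    have hble : -2 ≤ b ∧ b ≤ 2 := by
      rw [abs_le] at habs
      constructor <;> [exact_mod_cast habs.1; exact_mod_cast habs.2]
    obtain ⟨hb1, hb2⟩ := hble
    interval_cases b
    · -- b = -2 : ξ = 1
      have hsq : (ξ - 1) ^ 2 = 0 := by push_cast at hquad; linear_combination hquad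
      have : ξ = 1 := by
        have := pow_eq_zero_iff (n := 2) (by norm_num) |>.mp hsq
        linear_combination this
      exact hnotunit ⟨1, le_refl 1, by rw [this]; ring⟩
    · -- b = -1 : ξ^6 = 1
      push_cast at hquad
      exact hnotunit ⟨6, by norm_num, by linear_combination ((ξ + 1) * (ξ ^ 3 - 1)) * hquad⟩
    · -- b = 0 : ξ^4 = 1
      push_cast at hquad
      exact hnotunit ⟨4, by norm_num, by linear_combination (ξ ^ 2 - 1) * hquad⟩
    · -- b = 1 : ξ^3 = 1
      push_cast at hquad
      exact hnotunit ⟨3, by norm_num, by linear_combination (ξ - 1) * hquad⟩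
    · -- b = 2 : ξ = -1
      have hsq : (ξ + 1) ^ 2 = 0 := by push_cast at hquad; linear_combination hquad
      have : ξ = -1 := by
        have := pow_eq_zero_iff (n := 2) (by norm_num) |>.mp hsq
        linear_combination this
      exact hnotunit ⟨2, by norm_num, by rw [this]; ring⟩
  refine ⟨heven, ?_⟩
  obtain ⟨k, hk⟩ := heven
  omega
end

section
/- Let A be a 7 × 7 matrix with integer entries and determinant 1 such that no complex eigenvalue of A is a root of unity. Then the number of complex eigenvalues of A of modulus 1, counted with multiplicity, is either 0 or 2. -/
open Polynomial

private lemma aeval_conj (p : ℚ[X]) (z : ℂ) :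
    aeval ((starRingEnd ℂ) z) p = (starRingEnd ℂ) (aeval z p) := by
  have h := Polynomial.aeval_algHom_apply
    ((Complex.conjAe.toAlgHom : ℂ →ₐ[ℝ] ℂ).restrictScalars ℚ) z p
  simpa using h

private lemma kronecker {z : ℂ} (hz : IsIntegral ℤ z)
    (h : ∀ w ∈ ((minpoly ℚ z).map (algebraMap ℚ ℂ)).roots, ‖w‖ = 1) :
    ∃ n : ℕ, 0 < n ∧ z ^ n = 1 := by
  have hzq : IsIntegral ℚ z := hz.tower_top
  let K := IntermediateField.adjoin ℚ ({z} : Set ℂ)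
  haveI : FiniteDimensional ℚ K := IntermediateField.adjoin.finiteDimensional hzq
  haveI : NumberField K := ⟨⟩
  set x : K := IntermediateField.AdjoinSimple.gen ℚ z with hx
  have hinj : Function.Injective (algebraMap K ℂ) := Subtype.val_injective
  have hmapx : algebraMap K ℂ x = z := rfl
  have hxint : IsIntegral ℤ x := by
    rw [← isIntegral_algebraMap_iff hinj, hmapx]; exact hz
  have hmin : minpoly ℚ x = minpoly ℚ z := by
    rw [← hmapx]; exact (minpoly.algebraMap_eq (A := ℚ) hinj x).symm
  have hnorm : ∀ φ : K →+* ℂ, ‖φ x‖ = 1 := by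
    intro φ
    have hr := NumberField.Embeddings.range_eval_eq_rootSet_minpoly K ℂ x
    have : φ x ∈ (minpoly ℚ x).rootSet ℂ := by
      rw [← hr]; exact ⟨φ, rfl⟩
    rw [hmin] at this
    rw [Polynomial.mem_rootSet] at this
    have hroot : φ x ∈ ((minpoly ℚ z).map (algebraMap ℚ ℂ)).roots := by
      rw [mem_roots']
      constructor
      · exact (Polynomial.map_ne_zero_iff (algebraMap ℚ ℂ).injective).2
          (minpoly.ne_zero hzq)
      · rw [IsRoot, eval_map, ← aeval_def]; exact this.2
    simpa using h _ hroot
  obtain ⟨n, hn, hxn⟩ := NumberField.Embeddings.pow_eq_one_of_norm_eq_one K ℂ hxint hnorm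
  refine ⟨n, hn, ?_⟩
  have := congrArg (algebraMap K ℂ) hxn
  rw [map_pow, hmapx, map_one] at this
  exact this

open Polynomial

private lemma aeval_conj' (p : ℚ[X]) (z : ℂ) :
    aeval ((starRingEnd ℂ) z) p = (starRingEnd ℂ) (aeval z p) := by
  simpa using Polynomial.aeval_algHom_apply
    ((Complex.conjAe.toAlgHom : ℂ →ₐ[ℝ] ℂ).restrictScalars ℚ) z p

private lemma minpoly_deg4 {z : ℂ} {Q : ℚ[X]} (hQm : Q.Monic) (hQ7 : Q.natDegree = 7)
    (hQ0 : Q.coeff 0 = -1) (hz : aeval z Q = 0) (habs : ‖z‖ = 1)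
    (hint : IsIntegral ℤ z) (hconj : (starRingEnd ℂ) z ≠ z)
    (hnru : ∀ ξ : ℂ, aeval ξ Q = 0 → ¬∃ m : ℕ, 1 ≤ m ∧ ξ ^ m = 1) :
    (minpoly ℚ z).natDegree = 4 := by
  have hzq : IsIntegral ℚ z := hint.tower_top
  set M := minpoly ℚ z with hM
  have hMirr : Irreducible M := minpoly.irreducible hzq
  have hMmonic : M.Monic := minpoly.monic hzq
  have hMne : M ≠ 0 := hMmonic.ne_zero
  have hdvd : M ∣ Q := minpoly.dvd ℚ z hz
  have hQne : Q ≠ 0 := hQm.ne_zero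
  have hd7 : M.natDegree ≤ 7 := hQ7 ▸ natDegree_le_of_dvd hdvd hQne
  have hz0 : z ≠ 0 := by
    intro h; rw [h] at habs; simp at habs
  have hMz : aeval z M = 0 := minpoly.aeval ℚ z
  have hconjroot : aeval ((starRingEnd ℂ) z) M = 0 := by
    rw [aeval_conj', hMz, map_zero]
  have hzinv : (starRingEnd ℂ) z = z⁻¹ := by
    have h1 : z * (starRingEnd ℂ) z = 1 := by
      rw [Complex.mul_conj]
      norm_cast
      rw [← Complex.sq_norm, habs]; norm_num
    exact (inv_eq_of_mul_eq_one_right h1).symm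
  -- M has nonzero constant coefficient
  have hM0ne : M.coeff 0 ≠ 0 := by
    intro h0
    have hXdvd : X ∣ M := X_dvd_iff.2 h0
    have : (X : ℚ[X]) = M :=
      eq_of_monic_of_associated monic_X hMmonic
        (irreducible_X.associated_of_dvd hMirr hXdvd)
    rw [← this] at hMz
    simp at hMz
    exact hz0 hMz
  -- z is a root of the reverse of M
  haveI : Invertible z := invertibleOfNonzero hz0
  have hczne : (starRingEnd ℂ) z ≠ 0 := by rw [hzinv]; exact inv_ne_zero hz0
  haveI : Invertible ((starRingEnd ℂ) z) := invertibleOfNonzero hczne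
  have hrev0 : aeval z M.reverse = 0 := by
    have hkey := eval₂_reverse_mul_pow (algebraMap ℚ ℂ) ((starRingEnd ℂ) z) M
    have hiz : (⅟((starRingEnd ℂ) z) : ℂ) = z := by
      rw [invOf_eq_inv, hzinv, inv_inv]
    rw [hiz, ← aeval_def, ← aeval_def, hconjroot] at hkey
    have hpow : ((starRingEnd ℂ) z) ^ M.natDegree ≠ 0 := pow_ne_zero _ hczne
    exact (mul_eq_zero.1 hkey).resolve_right hpow
  have hMrevdvd : M ∣ M.reverse := minpoly.dvd ℚ z hrev0
  obtain ⟨q, hq⟩ := hMrevdvd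
  have hrevne : M.reverse ≠ 0 := by
    rw [Ne, reverse_eq_zero]; exact hMne
  have hqne : q ≠ 0 := by rintro rfl; rw [mul_zero] at hq; exact hrevne hq
  have htd : M.natTrailingDegree = 0 :=
    natTrailingDegree_eq_zero.2 (Or.inr hM0ne)
  have hrevdeg : M.reverse.natDegree = M.natDegree := by
    rw [reverse_natDegree, htd, Nat.sub_zero]
  have hqdeg : q.natDegree = 0 := by
    have := hq ▸ hrevdeg
    rw [natDegree_mul hMne hqne] at this
    omega
  obtain ⟨c, hc⟩ := natDegree_eq_zero.1 hqdeg
  rw [← hc] at hq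
  -- determine c
  have hcoeff0 : M.coeff 0 * c = 1 := by
    have := congrArg (fun p => coeff p 0) hq
    simpa [coeff_zero_reverse, hMmonic.leadingCoeff, mul_coeff_zero] using this.symm
  have hlead : c = M.coeff 0 := by
    have := congrArg leadingCoeff hq
    rw [reverse_leadingCoeff, trailingCoeff, htd] at this
    rw [this, leadingCoeff_mul, hMmonic.leadingCoeff, one_mul, leadingCoeff_C]
  have hcc : c * c = 1 := by rw [hlead] at hcoeff0 ⊢; linarith [hcoeff0]
  -- a helper: if a rational a with z = a impossible... roots at ±1 give contradiction with hconj
  have hnotroot : ∀ a : ℚ, (a : ℂ) = z → False := by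
    intro a ha
    apply hconj
    rw [← ha]
    simp [Complex.conj_ofReal]
  -- c = -1 impossible
  have hid : ∀ (x : ℚ) (p : ℚ[X]), eval₂ (RingHom.id ℚ) x p = eval x p := fun _ _ => rfl
  have heval1 : M.reverse.eval 1 = M.eval 1 := by
    haveI : Invertible (1 : ℚ) := invertibleOne
    have h := eval₂_reverse_mul_pow (RingHom.id ℚ) (1 : ℚ) M
    simpa [hid, invOf_one] using h
  have hcval : c = 1 := by
    rcases mul_self_eq_one_iff.1 hcc with h | h
    · exact h
    · exfalso
      rw [h] at hq
      have h1 : M.eval 1 = 0 := by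
        have := heval1
        rw [hq] at this
        simp at this
        linarith [this]
      have hXdvd : (X - C (1:ℚ)) ∣ M := dvd_iff_isRoot.2 h1
      have hMX : (X - C (1:ℚ)) = M :=
        eq_of_monic_of_associated (monic_X_sub_C 1) hMmonic
          ((irreducible_X_sub_C (1:ℚ)).associated_of_dvd hMirr hXdvd)
      rw [← hMX] at hMz
      simp at hMz
      exact hnotroot 1 (by push_cast; linear_combination -hMz)
  rw [hcval] at hq hlead
  rw [map_one, mul_one] at hq
  have hM0 : M.coeff 0 = 1 := hlead.symm
  -- even degree
  have heven : Even M.natDegree := by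
    by_contra hodd
    rw [Nat.not_even_iff_odd] at hodd
    haveI : Invertible (-1 : ℚ) := invertibleOfNonzero (by norm_num)
    have this := eval₂_reverse_mul_pow (RingHom.id ℚ) (-1 : ℚ) M
    have hinv : (⅟(-1 : ℚ)) = -1 := by
      rw [invOf_eq_inv]; norm_num
    rw [hinv, hq, hodd.neg_one_pow, hid] at this
    have hm1 : M.eval (-1) = 0 := by linarith [this]
    have hXdvd : (X - C (-1:ℚ)) ∣ M := dvd_iff_isRoot.2 hm1
    have hMX : (X - C (-1:ℚ)) = M :=
      eq_of_monic_of_associated (monic_X_sub_C _) hMmonic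
        ((irreducible_X_sub_C (-1:ℚ)).associated_of_dvd hMirr hXdvd)
    rw [← hMX] at hMz
    simp at hMz
    exact hnotroot (-1) (by push_cast; linear_combination -hMz)
  have hdpos : 0 < M.natDegree := minpoly.natDegree_pos hzq
  -- exclude degree 2
  have hne2 : M.natDegree ≠ 2 := by
    intro hd2
    have hmapM : M = (minpoly ℤ z).map (algebraMap ℤ ℚ) :=
      minpoly.isIntegrallyClosed_eq_field_fractions' ℚ hint
    set b : ℤ := (minpoly ℤ z).coeff 1 with hbdef
    clear_value b
    have hb : M.coeff 1 = (b : ℚ) := by rw [hmapM, coeff_map, hbdef]; simp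
    have hz2 : z ^ 2 + (b : ℂ) * z + 1 = 0 := by
      have hsum := aeval_eq_sum_range' (p := M) (n := 3) (by omega) z
      rw [hMz] at hsum
      rw [Finset.sum_range_succ, Finset.sum_range_succ, Finset.sum_range_succ,
        Finset.sum_range_zero] at hsum
      have hlead2 : M.coeff 2 = 1 := by
        have := hMmonic.coeff_natDegree
        rwa [hd2] at this
      rw [hM0, hlead2, hb] at hsum
      rw [zero_add] at hsum
      simp only [Rat.smul_def] at hsum
      push_cast at hsum
      linear_combination -hsum
    -- conjugate equation
    have hw2 : ((starRingEnd ℂ) z) ^ 2 + (b : ℂ) * ((starRingEnd ℂ) z) + 1 = 0 := by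
      have := congrArg (starRingEnd ℂ) hz2
      simpa using this
    have hsumzw : z + (starRingEnd ℂ) z = -(b : ℂ) := by
      have hdiff : (z - (starRingEnd ℂ) z) * (z + (starRingEnd ℂ) z + (b:ℂ)) = 0 := by
        linear_combination hz2 - hw2
      rcases mul_eq_zero.1 hdiff with h | h
      · exfalso; apply hconj; linear_combination -h
      · linear_combination h
    have hre : 2 * z.re = -(b : ℝ) := by
      have h2 := Complex.add_conj z
      rw [h2] at hsumzw
      have h3 := congrArg Complex.re hsumzw
      simpa using h3
    have him : z.im ≠ 0 := by
      intro h
      exact hconj (Complex.conj_eq_iff_im.2 h)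
    have habs2 : z.re ^ 2 + z.im ^ 2 = 1 := by
      have := Complex.sq_norm z
      rw [habs, Complex.normSq_apply] at this
      ring_nf
      ring_nf at this
      linarith [this]
    have him2 : 0 < z.im ^ 2 := by positivity
    have hrelt : z.re ^ 2 < 1 := by nlinarith
    have hb' : (b : ℝ) = -(2 * z.re) := by linarith
    have hblt : (b : ℝ) ^ 2 < 4 := by rw [hb']; nlinarith
    have hbint : b = -1 ∨ b = 0 ∨ b = 1 := by
      have : b ^ 2 < 4 := by exact_mod_cast hblt
      have h2 : -2 < b ∧ b < 2 := by constructor <;> nlinarith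
      omega
    apply hnru z hz
    refine ⟨12, by norm_num, ?_⟩
    rcases hbint with rfl | rfl | rfl
    · push_cast at hz2
      linear_combination (z^10 + z^9 - z^7 - z^6 + z^4 + z^3 - z - 1) * hz2
    · push_cast at hz2
      linear_combination (z^10 - z^8 + z^6 - z^4 + z^2 - 1) * hz2
    · push_cast at hz2
      linear_combination (z^10 - z^9 + z^7 - z^6 + z^4 - z^3 + z - 1) * hz2
  -- exclude degree 6
  have hne6 : M.natDegree ≠ 6 := by
    intro hd6
    obtain ⟨c', hc'⟩ := hdvd
    have hc'ne : c' ≠ 0 := by rintro rfl; rw [mul_zero] at hc'; exact hQne hc'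
    have hc'deg : c'.natDegree = 1 := by
      have := hc' ▸ hQ7
      rw [natDegree_mul hMne hc'ne] at this
      omega
    have hc'monic : c'.Monic := hMmonic.of_mul_monic_left (hc' ▸ hQm)
    have hc'0 : c'.coeff 0 = -1 := by
      have := congrArg (fun p => coeff p 0) hc'
      simp only [mul_coeff_zero, hM0, one_mul] at this
      rw [hQ0] at this
      exact this.symm
    have hc'eq : c' = X + C (-1 : ℚ) := by
      have := hc'monic.eq_X_add_C hc'deg
      rwa [hc'0] at this
    apply hnru 1 _ ⟨1, le_refl 1, one_pow 1⟩
    rw [hc', map_mul, hc'eq]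
    simp
  -- conclude
  rcases heven with ⟨k, hk⟩
  omega

open scoped Classical in
theorem stmt_9 (A : Matrix (Fin 7) (Fin 7) ℤ) (hdet : A.det = 1)
    (hnru : ∀ ξ ∈ ((A.charpoly).map (Int.castRingHom ℂ)).roots,
      ¬∃ m : ℕ, 1 ≤ m ∧ ξ ^ m = 1) :
    Multiset.card
        (((A.charpoly).map (Int.castRingHom ℂ)).roots.filter
          fun z => ‖z‖ = 1) = 0 ∨
      Multiset.card
        (((A.charpoly).map (Int.castRingHom ℂ)).roots.filter
          fun z => ‖z‖ = 1) = 2 := by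
  set P : ℂ[X] := (A.charpoly).map (Int.castRingHom ℂ) with hPdef
  set Q : ℚ[X] := (A.charpoly).map (Int.castRingHom ℚ) with hQdef
  have hcomp : (Int.castRingHom ℂ) = (algebraMap ℚ ℂ).comp (Int.castRingHom ℚ) :=
    Subsingleton.elim _ _
  have hfact : P = Q.map (algebraMap ℚ ℂ) := by
    rw [hQdef, Polynomial.map_map, ← hcomp]
  have hQm : Q.Monic := (A.charpoly_monic).map _
  have hQ7 : Q.natDegree = 7 := by
    rw [hQdef, (A.charpoly_monic).natDegree_map]
    simp [Matrix.charpoly_natDegree_eq_dim]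
  have hQ0 : Q.coeff 0 = -1 := by
    have h := Matrix.det_eq_sign_charpoly_coeff A
    rw [hdet] at h
    have : A.charpoly.coeff 0 = -1 := by
      simp only [Fintype.card_fin] at h
      norm_num at h
      linarith [h]
    rw [hQdef, Polynomial.coeff_map, this]
    simp
  have hQne : Q ≠ 0 := hQm.ne_zero
  have hPm : P.Monic := hfact ▸ hQm.map _
  have hPne : P ≠ 0 := hPm.ne_zero
  -- bridge between roots of P and aeval on Q
  have hbridge : ∀ ξ : ℂ, ξ ∈ P.roots ↔ Polynomial.aeval ξ Q = 0 := by
    intro ξ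
    rw [Polynomial.mem_roots hPne, Polynomial.IsRoot, hfact, Polynomial.eval_map,
      ← Polynomial.aeval_def]
  have hnru' : ∀ ξ : ℂ, Polynomial.aeval ξ Q = 0 → ¬∃ m : ℕ, 1 ≤ m ∧ ξ ^ m = 1 := by
    intro ξ hξ
    exact hnru ξ ((hbridge ξ).2 hξ)
  have hint : ∀ ξ : ℂ, ξ ∈ P.roots → IsIntegral ℤ ξ := by
    intro ξ hξ
    refine ⟨A.charpoly, A.charpoly_monic, ?_⟩
    have := (hbridge ξ).1 hξ
    rw [hQdef, ← algebraMap_int_eq, Polynomial.aeval_map_algebraMap] at this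
    rw [← Polynomial.aeval_def]
    exact this
  -- conjugates of roots are roots
  have hconjmem : ∀ ξ : ℂ, ξ ∈ P.roots → (starRingEnd ℂ) ξ ∈ P.roots := by
    intro ξ hξ
    rw [hbridge] at hξ ⊢
    rw [aeval_conj', hξ, map_zero]
  -- unimodular roots are not real
  have hnonreal : ∀ ξ : ℂ, ξ ∈ P.roots → ‖ξ‖ = 1 → (starRingEnd ℂ) ξ ≠ ξ := by
    intro ξ hξ habs h
    have hre : ξ = (ξ.re : ℂ) := (Complex.conj_eq_iff_re.1 h).symm
    rw [hre] at habs
    rw [Complex.norm_real, Real.norm_eq_abs] at habs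
    rcases abs_eq (by norm_num : (0:ℝ) ≤ 1) |>.1 habs with h1 | h1
    · exact hnru ξ hξ ⟨1, le_refl 1, by rw [hre, h1]; norm_num⟩
    · exact hnru ξ hξ ⟨2, by norm_num, by rw [hre, h1]; norm_num⟩
  set U := P.roots.filter (fun z => ‖z‖ = 1) with hU
  have hUmem : ∀ ξ : ℂ, ξ ∈ U → ξ ∈ P.roots ∧ ‖ξ‖ = 1 := by
    intro ξ hξ
    rw [hU, Multiset.mem_filter] at hξ
    exact hξ
  -- degree-4 fact
  have hdeg4 : ∀ ξ : ℂ, ξ ∈ P.roots → ‖ξ‖ = 1 → (minpoly ℚ ξ).natDegree = 4 := by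
    intro ξ hξ habs
    exact minpoly_deg4 hQm hQ7 hQ0 ((hbridge ξ).1 hξ) habs (hint ξ hξ)
      (hnonreal ξ hξ habs) hnru'
  -- claim 1 : card U ≠ 1
  have hne1 : Multiset.card U ≠ 1 := by
    intro h1
    obtain ⟨z, hz⟩ := Multiset.card_eq_one.1 h1
    have hzU : z ∈ U := by rw [hz]; exact Multiset.mem_singleton_self z
    obtain ⟨hzr, hza⟩ := hUmem z hzU
    have hcU : (starRingEnd ℂ) z ∈ U := by
      rw [hU, Multiset.mem_filter]
      exact ⟨hconjmem z hzr, by rw [Complex.norm_conj]; exact hza⟩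
    rw [hz, Multiset.mem_singleton] at hcU
    exact hnonreal z hzr hza hcU
  -- repeated unimodular root is impossible
  have hrep : ∀ w : ℂ, w ∈ P.roots → ‖w‖ = 1 → 2 ≤ P.roots.count w → False := by
    intro w hwr hwa hcount
    have hwq : IsIntegral ℚ w := (hint w hwr).tower_top
    have hdvd : minpoly ℚ w ∣ Q := minpoly.dvd ℚ w ((hbridge w).1 hwr)
    obtain ⟨c, hc⟩ := hdvd
    have hcne : c ≠ 0 := by rintro rfl; rw [mul_zero] at hc; exact hQne hc
    have hProots : P.roots =
        ((minpoly ℚ w).map (algebraMap ℚ ℂ)).roots + (c.map (algebraMap ℚ ℂ)).roots := by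
      rw [hfact, hc, Polynomial.map_mul]
      rw [Polynomial.roots_mul]
      rw [← Polynomial.map_mul, ← hc, ← hfact]
      exact hPne
    have hsep : ((minpoly ℚ w).map (algebraMap ℚ ℂ)).Separable :=
      ((minpoly.irreducible hwq).separable).map
    have hcount1 : ((minpoly ℚ w).map (algebraMap ℚ ℂ)).roots.count w ≤ 1 :=
      Multiset.nodup_iff_count_le_one.1 (Polynomial.nodup_roots hsep) w
    have hwc : w ∈ (c.map (algebraMap ℚ ℂ)).roots := by
      by_contra hnot
      have : (c.map (algebraMap ℚ ℂ)).roots.count w = 0 := Multiset.count_eq_zero.2 hnot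
      rw [hProots, Multiset.count_add, this] at hcount
      omega
    have hwc0 : Polynomial.aeval w c = 0 := by
      have := Polynomial.mem_roots'.1 hwc
      rw [Polynomial.IsRoot, Polynomial.eval_map, ← Polynomial.aeval_def] at this
      exact this.2
    have hdvd2 : minpoly ℚ w ∣ c := minpoly.dvd ℚ w hwc0
    have hdvd3 : minpoly ℚ w * minpoly ℚ w ∣ Q := by
      rw [hc]; exact mul_dvd_mul_left _ hdvd2
    have := Polynomial.natDegree_le_of_dvd hdvd3 hQne
    rw [Polynomial.natDegree_mul (minpoly.ne_zero hwq) (minpoly.ne_zero hwq),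
      hdeg4 w hwr hwa, hQ7] at this
    omega
  -- pair of unrelated unimodular roots is impossible
  have hpair : ∀ z w : ℂ, z ∈ P.roots → w ∈ P.roots → ‖z‖ = 1 →
      ‖w‖ = 1 → w ≠ z → w ≠ (starRingEnd ℂ) z → False := by
    intro z w hzr hwr hza hwa hwz hwcz
    have hzq : IsIntegral ℚ z := (hint z hzr).tower_top
    have hwq : IsIntegral ℚ w := (hint w hwr).tower_top
    have hdvdz : minpoly ℚ z ∣ Q := minpoly.dvd ℚ z ((hbridge z).1 hzr)
    have hdvdw : minpoly ℚ w ∣ Q := minpoly.dvd ℚ w ((hbridge w).1 hwr)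
    by_cases hMeq : minpoly ℚ z = minpoly ℚ w
    · -- Kronecker case
      set Mc : ℂ[X] := (minpoly ℚ z).map (algebraMap ℚ ℂ) with hMc
      have hMcne : Mc ≠ 0 :=
        (Polynomial.map_ne_zero_iff (algebraMap ℚ ℂ).injective).2 (minpoly.ne_zero hzq)
      have hcard : Multiset.card Mc.roots = 4 := by
        rw [Polynomial.splits_iff_card_roots.1 (IsAlgClosed.splits Mc), hMc,
          (minpoly.monic hzq).natDegree_map]
        exact hdeg4 z hzr hza
      have hmem : ∀ v : ℂ, Polynomial.aeval v (minpoly ℚ z) = 0 → v ∈ Mc.roots := by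
        intro v hv
        rw [Polynomial.mem_roots hMcne, Polynomial.IsRoot, Polynomial.eval_map,
          ← Polynomial.aeval_def]
        exact hv
      have hmz : z ∈ Mc.roots := hmem z (minpoly.aeval ℚ z)
      have hmcz : (starRingEnd ℂ) z ∈ Mc.roots := by
        apply hmem
        rw [aeval_conj', minpoly.aeval, map_zero]
      have hmw : w ∈ Mc.roots := hmem w (by rw [hMeq]; exact minpoly.aeval ℚ w)
      have hmcw : (starRingEnd ℂ) w ∈ Mc.roots := by
        apply hmem
        rw [aeval_conj', hMeq, minpoly.aeval, map_zero]
      have hzcz : (starRingEnd ℂ) z ≠ z := hnonreal z hzr hza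
      have hwcw : (starRingEnd ℂ) w ≠ w := hnonreal w hwr hwa
      have hcwz : (starRingEnd ℂ) w ≠ z := by
        intro h; apply hwcz
        rw [← h]; simp
      have hcwcz : (starRingEnd ℂ) w ≠ (starRingEnd ℂ) z := by
        intro h; exact hwz (starRingEnd ℂ |>.injective h)
      -- the finset of roots
      set F : Finset ℂ := {z, (starRingEnd ℂ) z, w, (starRingEnd ℂ) w} with hF
      have hFsub : F ⊆ Mc.roots.toFinset := by
        intro v hv
        rw [Multiset.mem_toFinset]
        simp only [hF, Finset.mem_insert, Finset.mem_singleton] at hv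
        rcases hv with rfl | rfl | rfl | rfl <;> assumption
      have hd1 : z ∉ ({(starRingEnd ℂ) z, w, (starRingEnd ℂ) w} : Finset ℂ) := by
        simp only [Finset.mem_insert, Finset.mem_singleton]
        push_neg
        exact ⟨hzcz.symm, hwz.symm, hcwz.symm⟩
      have hd2 : (starRingEnd ℂ) z ∉ ({w, (starRingEnd ℂ) w} : Finset ℂ) := by
        simp only [Finset.mem_insert, Finset.mem_singleton]
        push_neg
        exact ⟨hwcz.symm, fun h => hcwcz h.symm⟩
      have hd3 : w ∉ ({(starRingEnd ℂ) w} : Finset ℂ) := by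
        simp only [Finset.mem_singleton]
        exact fun h => hwcw h.symm
      have hFcard : F.card = 4 := by
        rw [hF, Finset.card_insert_of_notMem hd1, Finset.card_insert_of_notMem hd2,
          Finset.card_insert_of_notMem hd3, Finset.card_singleton]
      have hFeq : F = Mc.roots.toFinset := by
        apply Finset.eq_of_subset_of_card_le hFsub
        calc Mc.roots.toFinset.card ≤ Multiset.card Mc.roots := Multiset.toFinset_card_le _
        _ = 4 := hcard
        _ = F.card := hFcard.symm
      have hallone : ∀ v ∈ Mc.roots, ‖v‖ = 1 := by
        intro v hv
        have hvF : v ∈ F := by rw [hFeq, Multiset.mem_toFinset]; exact hv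
        simp only [hF, Finset.mem_insert, Finset.mem_singleton] at hvF
        rcases hvF with rfl | rfl | rfl | rfl <;>
          simp [Complex.norm_conj, hza, hwa]
      obtain ⟨n, hn, hzn⟩ := kronecker (hint z hzr) hallone
      exact hnru z hzr ⟨n, hn, hzn⟩
    · -- coprime case
      have hMzirr := minpoly.irreducible hzq
      have hMwirr := minpoly.irreducible hwq
      have hndvd : ¬ minpoly ℚ z ∣ minpoly ℚ w := by
        intro hdvd
        exact hMeq (Polynomial.eq_of_monic_of_associated (minpoly.monic hzq)
          (minpoly.monic hwq) (hMzirr.associated_of_dvd hMwirr hdvd))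
      have hcop : IsCoprime (minpoly ℚ z) (minpoly ℚ w) :=
        (hMzirr.coprime_iff_not_dvd).2 hndvd
      have hdvd3 : minpoly ℚ z * minpoly ℚ w ∣ Q := hcop.mul_dvd hdvdz hdvdw
      have := Polynomial.natDegree_le_of_dvd hdvd3 hQne
      rw [Polynomial.natDegree_mul (minpoly.ne_zero hzq) (minpoly.ne_zero hwq),
        hdeg4 z hzr hza, hdeg4 w hwr hwa, hQ7] at this
      omega
  -- claim 2 : card U ≤ 2
  have hle2 : Multiset.card U ≤ 2 := by
    by_contra hgt
    push_neg at hgt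
    have h3 : 3 ≤ Multiset.card U := hgt
    obtain ⟨z₁, hm1⟩ := Multiset.card_pos_iff_exists_mem.1 (by omega : 0 < Multiset.card U)
    obtain ⟨U₁, hU1⟩ := Multiset.exists_cons_of_mem hm1
    have hc1 : 2 ≤ Multiset.card U₁ := by
      have := congrArg Multiset.card hU1
      rw [Multiset.card_cons] at this
      omega
    obtain ⟨z₂, hm2⟩ := Multiset.card_pos_iff_exists_mem.1 (by omega : 0 < Multiset.card U₁)
    obtain ⟨U₂, hU2⟩ := Multiset.exists_cons_of_mem hm2
    have hc2 : 1 ≤ Multiset.card U₂ := by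
      have := congrArg Multiset.card hU2
      rw [Multiset.card_cons] at this
      omega
    obtain ⟨z₃, hm3⟩ := Multiset.card_pos_iff_exists_mem.1 (by omega : 0 < Multiset.card U₂)
    have hz₁U : z₁ ∈ U := hm1
    have hz₂U : z₂ ∈ U := by rw [hU1]; exact Multiset.mem_cons_of_mem hm2
    have hz₃U : z₃ ∈ U := by
      rw [hU1]; exact Multiset.mem_cons_of_mem (by rw [hU2]; exact Multiset.mem_cons_of_mem hm3)
    obtain ⟨h1r, h1a⟩ := hUmem z₁ hz₁U
    obtain ⟨h2r, h2a⟩ := hUmem z₂ hz₂U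
    obtain ⟨h3r, h3a⟩ := hUmem z₃ hz₃U
    have hcountU : ∀ v : ℂ, 2 ≤ Multiset.count v U → False := by
      intro v hcv
      have hvU : v ∈ U := Multiset.count_pos.1 (by omega)
      obtain ⟨hvr, hva⟩ := hUmem v hvU
      apply hrep v hvr hva
      calc 2 ≤ Multiset.count v U := hcv
      _ ≤ Multiset.count v P.roots := Multiset.count_le_of_le v (Multiset.filter_le _ _)
    have hU' : U = z₁ ::ₘ z₂ ::ₘ U₂ := by rw [hU1, hU2]
    by_cases h21 : z₂ = z₁
    · apply hcountU z₁
      rw [hU', h21, Multiset.count_cons_self, Multiset.count_cons_self]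
      omega
    by_cases h31 : z₃ = z₁
    · apply hcountU z₁
      rw [hU', Multiset.count_cons_self]
      have h0 : 0 < Multiset.count z₁ (z₂ ::ₘ U₂) :=
        Multiset.count_pos.2 (Multiset.mem_cons_of_mem (h31 ▸ hm3))
      omega
    by_cases h32 : z₃ = z₂
    · apply hcountU z₂
      have hle : Multiset.count z₂ (z₂ ::ₘ U₂) ≤ Multiset.count z₂ U :=
        Multiset.count_le_of_le _ (hU' ▸ Multiset.le_cons_self _ _)
      rw [Multiset.count_cons_self] at hle
      have h0 : 0 < Multiset.count z₂ U₂ := Multiset.count_pos.2 (h32 ▸ hm3)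
      omega
    -- now all distinct
    by_cases h12c : z₂ = (starRingEnd ℂ) z₁
    · exact hpair z₁ z₃ h1r h3r h1a h3a h31 (by rw [← h12c]; exact h32)
    · exact hpair z₁ z₂ h1r h2r h1a h2a h21 h12c
  omega
end

section
/- For every natural number N ≥ 6 there exists an N × N matrix A with integer entries and determinant 1 such that: no complex eigenvalue of A is a root of unity; exactly two complex eigenvalues of A, counted with multiplicity, have modulus 1; and the characteristic polynomial of A is reducible in ℤ[X] (in particular, A is not pseudo-Anosov). -/
open Polynomial

/-! ### Chebyshev growth lemmas -/

lemma pf11_cheb_aux {x : ℝ} (hx : 1 < x) : ∀ n : ℕ,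
    1 ≤ (Chebyshev.T ℝ n).eval x ∧ (Chebyshev.T ℝ n).eval x < (Chebyshev.T ℝ (n+1)).eval x := by
  intro n
  induction n with
  | zero => simp [Chebyshev.T_zero, Chebyshev.T_one, hx]
  | succ n ih =>
    obtain ⟨h1, h2⟩ := ih
    have hc : ((n:ℤ)+1 : ℤ) = ((n+1 : ℕ) : ℤ) := by push_cast; ring
    constructor
    · rw [← hc]; linarith
    · have hrec : (Chebyshev.T ℝ ((n:ℤ)+1+1)) = 2 * X * Chebyshev.T ℝ ((n:ℤ)+1) - Chebyshev.T ℝ n := by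
        have := Chebyshev.T_add_two ℝ (n : ℤ)
        convert this using 2
        ring
      rw [← hc, hrec]
      simp only [eval_sub, eval_mul, eval_ofNat, eval_X]
      nlinarith

lemma pf11_cheb_gt {x : ℝ} (hx : 1 < x) {m : ℕ} (hm : 1 ≤ m) : 1 < (Chebyshev.T ℝ m).eval x := by
  induction m with
  | zero => omega
  | succ j ih =>
    rcases Nat.lt_or_ge 1 (j+1) with h | h
    · have hj : 1 ≤ j := by omega
      have h2 := (pf11_cheb_aux hx j).2
      have hc : ((j:ℤ)+1 : ℤ) = ((j+1 : ℕ) : ℤ) := by push_cast; ring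
      rw [hc] at h2
      exact lt_trans (ih hj) h2
    · obtain rfl : j = 0 := by omega
      norm_num [Chebyshev.T_one]
      simpa using hx

/-! ### Conjugation trick for `√13` -/

lemma pf11_sqrt13_irrational : Irrational (Real.sqrt 13) := by
  rw [show ((13:ℝ) = ((13:ℕ):ℝ)) by norm_num]
  rw [irrational_sqrt_natCast_iff]
  rintro ⟨r, hr⟩
  have : r ≤ 13 := by nlinarith
  interval_cases r <;> omega

lemma pf11_vanish_neg_sqrt (f : ℚ[X]) (h : (aeval (Real.sqrt 13)) f = 0) :
    (aeval (-Real.sqrt 13)) f = 0 := by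
  set g : ℚ[X] := X^2 - C 13 with hg_def
  have hg : g.Monic := by
    apply Polynomial.monic_X_pow_sub_C
    norm_num
  have hdeg : (f %ₘ g).degree < g.degree := Polynomial.degree_modByMonic_lt f hg
  have hdg : g.degree = 2 := by
    rw [hg_def]
    exact Polynomial.degree_X_pow_sub_C (by norm_num) 13
  rw [hdg] at hdeg
  have hle : (f %ₘ g).degree ≤ 1 := by
    apply Polynomial.degree_le_iff_coeff_zero _ _ |>.mpr
    intro m hm
    by_contra hc
    have h2 := lt_of_le_of_lt (Polynomial.le_degree_of_ne_zero hc) hdeg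
    have hm' : (1:ℕ) < m := by exact_mod_cast hm
    have hm2 : (m:ℕ) < 2 := by exact_mod_cast h2
    omega
  have hr := Polynomial.eq_X_add_C_of_degree_le_one hle
  have hsplit : f %ₘ g + g * (f /ₘ g) = f := Polynomial.modByMonic_add_div f g
  have hg13 : (aeval (Real.sqrt 13)) g = 0 := by
    simp [hg_def, Real.sq_sqrt]
  have hgneg : (aeval (-Real.sqrt 13)) g = 0 := by
    simp [hg_def, neg_pow, Real.sq_sqrt]
  have hrval : (aeval (Real.sqrt 13)) (f %ₘ g) = 0 := by
    have h3 := congrArg (aeval (Real.sqrt 13)) hsplit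
    simp only [map_add, map_mul, hg13, h, zero_mul] at h3
    linarith [h3]
  set c1 := (f %ₘ g).coeff 1
  set c0 := (f %ₘ g).coeff 0
  rw [hr] at hrval
  simp at hrval
  have hc1 : c1 = 0 := by
    by_contra hc1
    have hc1' : (c1 : ℝ) ≠ 0 := by exact_mod_cast hc1
    have heq : Real.sqrt 13 = -(c0 : ℝ) / (c1 : ℝ) := by
      field_simp
      linarith [hrval]
    exact pf11_sqrt13_irrational ⟨-c0/c1, by rw [heq]; push_cast; ring⟩
  have hc0 : c0 = 0 := by
    rw [hc1] at hrval
    simpa using hrval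
  have hr0 : f %ₘ g = 0 := by rw [hr, hc1, hc0]; simp
  calc (aeval (-Real.sqrt 13)) f = (aeval (-Real.sqrt 13)) (f %ₘ g + g * (f /ₘ g)) := by rw [hsplit]
  _ = 0 := by simp [hgneg, hr0]

/-! ### The Salem-type eigenvalues on the unit circle -/

noncomputable def pf11_s13 : ℝ := Real.sqrt 13
noncomputable def pf11_a : ℝ := (1 - pf11_s13)/4
noncomputable def pf11_th : ℝ := Real.arccos pf11_a
noncomputable def pf11_xi : ℂ := Complex.exp (pf11_th * Complex.I)
noncomputable def pf11_xi' : ℂ := Complex.exp ((-pf11_th : ℝ) * Complex.I)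

lemma pf11_s13_lt : 3 < pf11_s13 ∧ pf11_s13 < 4 := by
  constructor
  · have h9 : (3:ℝ) = Real.sqrt 9 := by
      rw [show (9:ℝ) = 3^2 by norm_num, Real.sqrt_sq] ; norm_num
    rw [h9, pf11_s13]; exact Real.sqrt_lt_sqrt (by norm_num) (by norm_num)
  · have h16 : (4:ℝ) = Real.sqrt 16 := by
      rw [show (16:ℝ) = 4^2 by norm_num, Real.sqrt_sq] ; norm_num
    rw [h16, pf11_s13]; exact Real.sqrt_lt_sqrt (by norm_num) (by norm_num)

lemma pf11_s13_sq : pf11_s13 ^ 2 = 13 := Real.sq_sqrt (by norm_num)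

lemma pf11_a_mem : -1 ≤ pf11_a ∧ pf11_a ≤ 1 := by
  obtain ⟨h1, h2⟩ := pf11_s13_lt
  constructor <;> unfold pf11_a <;> nlinarith

lemma pf11_cos_th : Real.cos pf11_th = pf11_a := Real.cos_arccos pf11_a_mem.1 pf11_a_mem.2

lemma pf11_xi_abs : ‖pf11_xi‖ = 1 := Complex.norm_exp_ofReal_mul_I pf11_th
lemma pf11_xi'_abs : ‖pf11_xi'‖ = 1 := Complex.norm_exp_ofReal_mul_I (-pf11_th)

lemma pf11_cos_not_unity (m : ℕ) (hm : 1 ≤ m) (h : Real.cos (m * pf11_th) = 1) : False := by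
  obtain ⟨h3, h4⟩ := pf11_s13_lt
  have hT : (Chebyshev.T ℝ (m:ℤ)).eval pf11_a = 1 := by
    rw [← pf11_cos_th, Chebyshev.T_real_cos]
    rw [← h]
    norm_num
  set f : ℚ[X] := (Chebyshev.T ℚ (m:ℤ)).comp (Polynomial.C (1/4) * (1 - Polynomial.X)) - 1 with hf_def
  have hval : ∀ x : ℝ, (aeval x) f = (Chebyshev.T ℝ (m:ℤ)).eval ((1 - x)/4) - 1 := by
    intro x
    rw [hf_def]
    simp only [map_sub, map_one, Polynomial.aeval_comp]
    rw [Polynomial.Chebyshev.aeval_T]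
    congr 1
    simp
    ring
  have hf13 : (aeval (Real.sqrt 13)) f = 0 := by
    rw [hval, show (1 - Real.sqrt 13)/4 = pf11_a from rfl, hT, sub_self]
  have hfneg := pf11_vanish_neg_sqrt f hf13
  rw [hval] at hfneg
  have hgt : 1 < (Chebyshev.T ℝ (m:ℤ)).eval ((1 - -Real.sqrt 13)/4) := by
    apply pf11_cheb_gt _ hm
    have hss : pf11_s13 = Real.sqrt 13 := rfl
    nlinarith [h3]
  linarith

lemma pf11_xi_not_unity : ∀ m : ℕ, 1 ≤ m → pf11_xi ^ m ≠ 1 := by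
  intro m hm hpow
  apply pf11_cos_not_unity m hm
  have he : pf11_xi ^ m = Complex.exp ((m * pf11_th : ℝ) * Complex.I) := by
    rw [pf11_xi, ← Complex.exp_nat_mul]
    push_cast
    ring_nf
  rw [he] at hpow
  have h2 := congrArg Complex.re hpow
  rwa [Complex.exp_ofReal_mul_I_re, Complex.one_re] at h2

lemma pf11_xi'_not_unity : ∀ m : ℕ, 1 ≤ m → pf11_xi' ^ m ≠ 1 := by
  intro m hm hpow
  apply pf11_cos_not_unity m hm
  have he : pf11_xi' ^ m = Complex.exp ((m * (-pf11_th) : ℝ) * Complex.I) := by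
    rw [pf11_xi', ← Complex.exp_nat_mul]
    push_cast
    ring_nf
  rw [he] at hpow
  have h2 := congrArg Complex.re hpow
  rw [Complex.exp_ofReal_mul_I_re, Complex.one_re] at h2
  rw [show (m:ℝ) * -pf11_th = -((m:ℝ)*pf11_th) by ring, Real.cos_neg] at h2
  exact h2

/-! ### generic facts -/

lemma pf11_not_unity_of_abs_ne {z : ℂ} (h : ‖z‖ ≠ 1) :
    ∀ m : ℕ, 1 ≤ m → z ^ m ≠ 1 := by
  intro m hm hpow
  apply h
  have h1 : ‖z‖ ^ m = 1 := by
    rw [← norm_pow, hpow, norm_one]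
  have h0 : 0 ≤ ‖z‖ := norm_nonneg _
  rcases lt_trichotomy (‖z‖) 1 with hlt | he | hgt
  · exfalso
    have : ‖z‖ ^ m < 1 ^ m := by
      apply pow_lt_pow_left₀ hlt h0 (by omega)
    simp at this
    linarith
  · exact he
  · exfalso
    have : (1:ℝ) ^ m < ‖z‖ ^ m := by
      apply pow_lt_pow_left₀ hgt (by norm_num) (by omega)
    simp at this
    linarith

/-! ### Matrix representability -/

def pf11_MyRep (p : ℤ[X]) (n : ℕ) : Prop := ∃ A : Matrix (Fin n) (Fin n) ℤ, A.charpoly = p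

lemma pf11_myrep_mul {p q : ℤ[X]} {a b : ℕ} (hp : pf11_MyRep p a) (hq : pf11_MyRep q b) :
    pf11_MyRep (p * q) (a + b) := by
  obtain ⟨A, hA⟩ := hp; obtain ⟨B, hB⟩ := hq
  exact ⟨Matrix.reindex finSumFinEquiv finSumFinEquiv (Matrix.fromBlocks A 0 0 B),
    by rw [Matrix.charpoly_reindex, Matrix.charpoly_fromBlocks_zero₁₂, hA, hB]⟩

lemma pf11_myrep_congr {p : ℤ[X]} {a b : ℕ} (hp : pf11_MyRep p a) (h : a = b) : pf11_MyRep p b :=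
  h ▸ hp

lemma pf11_myrep_one : pf11_MyRep 1 0 := ⟨1, by simp [Matrix.charpoly, Matrix.det_isEmpty]⟩

lemma pf11_myrep_pow {p : ℤ[X]} {a : ℕ} (hp : pf11_MyRep p a) (j : ℕ) :
    pf11_MyRep (p ^ j) (a * j) := by
  induction j with
  | zero => simpa using pf11_myrep_one
  | succ n ih => exact pf11_myrep_congr (pf11_myrep_mul ih hp) (by ring)

/-! ### the three building-block polynomials and their companion matrices -/

noncomputable def pf11_p2 : ℤ[X] := X^2 - 3*X + 1
noncomputable def pf11_p3 : ℤ[X] := X^3 - X - 1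
noncomputable def pf11_p4 : ℤ[X] := X^4 - X^3 - X^2 - X + 1

lemma pf11_rep2 : pf11_MyRep pf11_p2 2 := by
  refine ⟨!![0, -1; 1, 3], ?_⟩
  rw [Matrix.charpoly]
  have h : Matrix.charmatrix !![(0:ℤ), -1; 1, 3] = !![(X : ℤ[X]), 1; -1, X - 3] := by
    ext i j
    fin_cases i <;> fin_cases j <;>
      simp [Matrix.charmatrix_apply, Matrix.diagonal, Matrix.vecHead, Matrix.vecTail]
  rw [h, Matrix.det_fin_two]
  simp [pf11_p2]; ring

lemma pf11_rep3 : pf11_MyRep pf11_p3 3 := by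
  refine ⟨!![0, 0, 1; 1, 0, 1; 0, 1, 0], ?_⟩
  rw [Matrix.charpoly]
  have h : Matrix.charmatrix !![(0:ℤ), 0, 1; 1, 0, 1; 0, 1, 0] =
      !![(X : ℤ[X]), 0, -1; -1, X, -1; 0, -1, X] := by
    ext i j
    fin_cases i <;> fin_cases j <;>
      simp [Matrix.charmatrix_apply, Matrix.diagonal, Matrix.vecHead, Matrix.vecTail]
  rw [h, Matrix.det_fin_three]
  simp [pf11_p3]; ring

lemma pf11_rep4 : pf11_MyRep pf11_p4 4 := by
  refine ⟨!![0, 0, 0, -1; 1, 0, 0, 1; 0, 1, 0, 1; 0, 0, 1, 1], ?_⟩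
  rw [Matrix.charpoly]
  have h : Matrix.charmatrix !![(0:ℤ), 0, 0, -1; 1, 0, 0, 1; 0, 1, 0, 1; 0, 0, 1, 1] =
      !![(X : ℤ[X]), 0, 0, 1; -1, X, 0, -1; 0, -1, X, -1; 0, 0, -1, X - 1] := by
    ext i j
    fin_cases i <;> fin_cases j <;>
      simp [Matrix.charmatrix_apply, Matrix.diagonal, Matrix.vecHead, Matrix.vecTail]
  rw [h]
  rw [Matrix.det_succ_row_zero]
  simp [Fin.sum_univ_succ, Matrix.det_fin_three, pf11_p4, Matrix.vecHead, Matrix.vecTail,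
    show ((2 : Fin 3).castSucc = (2 : Fin 4)) from rfl,
    show (Fin.succAbove (3 : Fin 4) 2 = 2) from rfl]
  ring

/-! ### roots of the building blocks over ℂ -/

noncomputable def pf11_y2 : ℝ := (1 + pf11_s13)/2
noncomputable def pf11_ss : ℝ := Real.sqrt ((pf11_s13 - 1)/2)
noncomputable def pf11_lam : ℝ := (pf11_y2 + pf11_ss)/2
noncomputable def pf11_lam' : ℝ := (pf11_y2 - pf11_ss)/2

lemma pf11_ss_sq : pf11_ss ^ 2 = (pf11_s13 - 1)/2 := by
  obtain ⟨h1, _⟩ := pf11_s13_lt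
  exact Real.sq_sqrt (by nlinarith)

lemma pf11_ss_nonneg : 0 ≤ pf11_ss := Real.sqrt_nonneg _

lemma pf11_lam_gt : 1 < pf11_lam := by
  obtain ⟨h1, h2⟩ := pf11_s13_lt
  have := pf11_ss_nonneg
  unfold pf11_lam pf11_y2; nlinarith

lemma pf11_lam'_mem : 0 < pf11_lam' ∧ pf11_lam' < 1 := by
  obtain ⟨h1, h2⟩ := pf11_s13_lt
  have h3 := pf11_ss_sq
  have h4 := pf11_ss_nonneg
  constructor <;> unfold pf11_lam' pf11_y2 <;> [nlinarith; nlinarith]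

-- the golden-ratio-like quadratic roots
noncomputable def pf11_s5 : ℝ := Real.sqrt 5
noncomputable def pf11_mu : ℝ := (3 + pf11_s5)/2
noncomputable def pf11_nu : ℝ := (3 - pf11_s5)/2

lemma pf11_s5_lt : 2 < pf11_s5 ∧ pf11_s5 < 3 := by
  constructor
  · have h4 : (2:ℝ) = Real.sqrt 4 := by
      rw [show (4:ℝ) = 2^2 by norm_num, Real.sqrt_sq] ; norm_num
    rw [h4, pf11_s5]; exact Real.sqrt_lt_sqrt (by norm_num) (by norm_num)
  · have h9 : (3:ℝ) = Real.sqrt 9 := by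
      rw [show (9:ℝ) = 3^2 by norm_num, Real.sqrt_sq] ; norm_num
    rw [h9, pf11_s5]; exact Real.sqrt_lt_sqrt (by norm_num) (by norm_num)

lemma pf11_s5_sq : pf11_s5 ^ 2 = 5 := Real.sq_sqrt (by norm_num)

/-! ### the plastic-type cubic root -/

lemma pf11_rho_exists : ∃ ρ : ℝ, 1.32 ≤ ρ ∧ ρ ≤ 1.33 ∧ ρ^3 - ρ - 1 = 0 := by
  have hcont : ContinuousOn (fun x : ℝ => x^3 - x - 1) (Set.Icc 1.32 1.33) := by
    fun_prop
  have hsub := intermediate_value_Icc (by norm_num : (1.32:ℝ) ≤ 1.33) hcont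
  have hmem : (0:ℝ) ∈ Set.Icc ((1.32:ℝ)^3 - 1.32 - 1) ((1.33:ℝ)^3 - 1.33 - 1) := by
    constructor <;> norm_num
  obtain ⟨ρ, hρmem, hρ⟩ := hsub hmem
  exact ⟨ρ, hρmem.1, hρmem.2, hρ⟩

/-! ### polynomial factorization helpers -/

lemma pf11_quad_expand (r₁ r₂ : ℂ) :
    (X - C r₁) * (X - C r₂) = X^2 - C (r₁+r₂) * X + C (r₁*r₂) := by
  simp only [C_add, C_mul]; ring

lemma pf11_quartic_expand {u v : ℂ} (hu : u + v = 1) (huv : u * v = -3) :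
    (X^2 - C u * X + 1) * (X^2 - C v * X + 1) = X^4 - X^3 - X^2 - X + 1 := by
  have hCsum : C u + C v = 1 := by rw [← C_add, hu, C_1]
  have hCprod : C u * C v = -3 := by
    rw [← C_mul, huv, show ((-3 : ℂ)) = -(3:ℂ) by ring, map_neg, map_ofNat]
  calc (X^2 - C u * X + 1) * (X^2 - C v * X + 1)
      = X^4 - (C u + C v)*X^3 + (C u * C v + 2)*X^2 - (C u + C v)*X + 1 := by ring
  _ = X^4 - X^3 - X^2 - X + 1 := by rw [hCsum, hCprod]; ring

/-! ### The main theorem -/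

open scoped Classical in
theorem stmt_11 (N : ℕ) (hN : 6 ≤ N) :
    ∃ A : Matrix (Fin N) (Fin N) ℤ,
      A.det = 1 ∧
      (∀ ξ ∈ ((A.charpoly).map (Int.castRingHom ℂ)).roots,
        ¬∃ m : ℕ, 1 ≤ m ∧ ξ ^ m = 1) ∧
      Multiset.card
        (((A.charpoly).map (Int.castRingHom ℂ)).roots.filter
          fun z => ‖z‖ = 1) = 2 ∧
      ¬Irreducible A.charpoly := by
  classical
  set ε := N % 2 with hε
  set k := (N - 4 - 3*ε)/2 with hk
  have hdim : 4 + (3*ε + 2*k) = N := by omega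
  have hNk : 3*ε + 2*k = N - 4 := by omega
  set P : ℤ[X] := pf11_p4 * (pf11_p3^ε * pf11_p2^k) with hP
  obtain ⟨A, hA⟩ := pf11_myrep_congr
    (pf11_myrep_mul pf11_rep4
      (pf11_myrep_mul (pf11_myrep_pow pf11_rep3 ε) (pf11_myrep_pow pf11_rep2 k))) hdim
  -- basic monicity / degree facts
  have hm2 : pf11_p2.Monic := by
    have h : pf11_p2 = X^2 + (-(3*X) + 1) := by unfold pf11_p2; ring
    rw [h]
    exact Polynomial.monic_X_pow_add (lt_of_le_of_lt (by compute_degree) (by norm_num))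
  have hm3 : pf11_p3.Monic := by
    have h : pf11_p3 = X^3 + (-X - 1) := by unfold pf11_p3; ring
    rw [h]
    exact Polynomial.monic_X_pow_add (lt_of_le_of_lt (by compute_degree) (by norm_num))
  have hd2 : pf11_p2.natDegree = 2 := by unfold pf11_p2; compute_degree!
  have hd3 : pf11_p3.natDegree = 3 := by unfold pf11_p3; compute_degree!
  have hd4 : pf11_p4.natDegree = 4 := by unfold pf11_p4; compute_degree!
  -- the cubic root
  obtain ⟨ρ, hρ1, hρ2, hρ0⟩ := pf11_rho_exists
  have hρpos : 0 < ρ := by linarith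
  set tt := Real.sqrt (1/ρ - ρ^2/4) with htt
  have htt2 : tt^2 = 1/ρ - ρ^2/4 := by
    apply Real.sq_sqrt
    rw [sub_nonneg, div_le_div_iff₀ (by norm_num) hρpos]
    nlinarith
  -- complex roots
  set uc : ℂ := ((2*pf11_a : ℝ) : ℂ) with huc
  set vc : ℂ := ((pf11_y2 : ℝ) : ℂ) with hvc
  set lc : ℂ := ((pf11_lam : ℝ) : ℂ) with hlc
  set lc' : ℂ := ((pf11_lam' : ℝ) : ℂ) with hlc'
  set mc : ℂ := ((pf11_mu : ℝ) : ℂ) with hmc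
  set nc : ℂ := ((pf11_nu : ℝ) : ℂ) with hnc
  set rc : ℂ := ((ρ : ℝ) : ℂ) with hrc
  set cc : ℂ := ((-ρ/2 : ℝ) : ℂ) + ((tt : ℝ) : ℂ) * Complex.I with hcc
  set cc' : ℂ := ((-ρ/2 : ℝ) : ℂ) - ((tt : ℝ) : ℂ) * Complex.I with hcc'
  -- scalar identities
  have hxi_sum : pf11_xi + pf11_xi' = uc := by
    rw [pf11_xi, pf11_xi', huc]
    rw [show ((-pf11_th : ℝ) : ℂ) * Complex.I = -((pf11_th:ℝ):ℂ) * Complex.I by push_cast; ring]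
    rw [Complex.exp_mul_I, Complex.exp_mul_I]
    rw [show -((pf11_th:ℝ):ℂ) = -((pf11_th:ℝ):ℂ) from rfl]
    simp only [Complex.cos_neg, Complex.sin_neg]
    rw [← Complex.ofReal_cos, pf11_cos_th]
    push_cast
    ring
  have hxi_prod : pf11_xi * pf11_xi' = 1 := by
    rw [pf11_xi, pf11_xi', ← Complex.exp_add, ← Complex.exp_zero]
    congr 1
    push_cast
    ring
  have hl_sum : lc + lc' = vc := by
    rw [hlc, hlc', hvc]
    have h : pf11_lam + pf11_lam' = pf11_y2 := by unfold pf11_lam pf11_lam'; ring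
    rw [← Complex.ofReal_add, h]
  have hl_prod : lc * lc' = 1 := by
    have h : pf11_lam * pf11_lam' = 1 := by
      unfold pf11_lam pf11_lam' pf11_y2
      linear_combination (-(1/4) : ℝ) * pf11_ss_sq + (1/16 : ℝ) * pf11_s13_sq
    rw [hlc, hlc', ← Complex.ofReal_mul, h, Complex.ofReal_one]
  have hsum_uv : uc + vc = 1 := by
    have h : 2*pf11_a + pf11_y2 = 1 := by unfold pf11_a pf11_y2; ring
    rw [huc, hvc, ← Complex.ofReal_add, h, Complex.ofReal_one]
  have hprod_uv : uc * vc = -3 := by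
    have h : (2*pf11_a) * pf11_y2 = -3 := by
      unfold pf11_a pf11_y2
      linear_combination (-(1/4) : ℝ) * pf11_s13_sq
    rw [huc, hvc, ← Complex.ofReal_mul, h]
    push_cast
    ring
  -- quartic factorization
  have hfact4 : pf11_p4.map (Int.castRingHom ℂ) =
      (X - C pf11_xi) * (X - C pf11_xi') * ((X - C lc) * (X - C lc')) := by
    have e1 : (X - C pf11_xi) * (X - C pf11_xi') = X^2 - C uc * X + 1 := by
      rw [pf11_quad_expand, hxi_sum, hxi_prod, C_1]
    have e2 : (X - C lc) * (X - C lc') = X^2 - C vc * X + 1 := by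
      rw [pf11_quad_expand, hl_sum, hl_prod, C_1]
    rw [e1, e2, pf11_quartic_expand hsum_uv hprod_uv]
    unfold pf11_p4
    simp only [Polynomial.map_add, Polynomial.map_sub, Polynomial.map_pow, Polynomial.map_one,
      Polynomial.map_X]
  -- quadratic factorization
  have hmu_sum : mc + nc = 3 := by
    have h : pf11_mu + pf11_nu = 3 := by unfold pf11_mu pf11_nu; ring
    rw [hmc, hnc, ← Complex.ofReal_add, h]
    norm_num
  have hmu_prod : mc * nc = 1 := by
    have h : pf11_mu * pf11_nu = 1 := by
      unfold pf11_mu pf11_nu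
      linear_combination (-(1/4) : ℝ) * pf11_s5_sq
    rw [hmc, hnc, ← Complex.ofReal_mul, h, Complex.ofReal_one]
  have hfact2 : pf11_p2.map (Int.castRingHom ℂ) = (X - C mc) * (X - C nc) := by
    rw [pf11_quad_expand, hmu_sum, hmu_prod, C_1]
    rw [show C (3:ℂ) = (3 : ℂ[X]) from map_ofNat C 3]
    unfold pf11_p2
    simp only [Polynomial.map_add, Polynomial.map_sub, Polynomial.map_pow, Polynomial.map_one,
      Polynomial.map_X, Polynomial.map_mul, Polynomial.map_ofNat]
  -- cubic factorization
  have hcc_sum : cc + cc' = -rc := by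
    rw [hcc, hcc', hrc]
    push_cast
    ring
  have htt2c : ((tt:ℝ):ℂ)^2 = 1/((ρ:ℝ):ℂ) - ((ρ:ℝ):ℂ)^2/4 := by
    have := congrArg (fun x : ℝ => (x : ℂ)) htt2
    push_cast at this
    convert this using 1 <;> push_cast <;> ring
  have hcc_prod : cc * cc' = ((1/ρ : ℝ) : ℂ) := by
    rw [hcc, hcc']
    push_cast
    linear_combination htt2c - ((tt:ℝ):ℂ)^2 * Complex.I_sq
  have hrc_sq : rc * rc - ((1/ρ : ℝ) : ℂ) = 1 := by
    have h : ρ * ρ - 1/ρ = 1 := by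
      field_simp
      linear_combination hρ0
    rw [hrc, show ((ρ:ℝ):ℂ) * ((ρ:ℝ):ℂ) = ((ρ*ρ : ℝ):ℂ) from by push_cast; ring,
      ← Complex.ofReal_sub, h, Complex.ofReal_one]
  have hrc_inv : rc * ((1/ρ : ℝ) : ℂ) = 1 := by
    have h : ρ * (1/ρ) = 1 := by field_simp
    rw [hrc, ← Complex.ofReal_mul, h, Complex.ofReal_one]
  have hfact3 : pf11_p3.map (Int.castRingHom ℂ) =
      (X - C rc) * ((X - C cc) * (X - C cc')) := by
    have e3 : (X - C cc) * (X - C cc') = X^2 + C rc * X + C ((1/ρ : ℝ) : ℂ) := by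
      rw [pf11_quad_expand, hcc_sum, hcc_prod]
      rw [map_neg]
      ring
    rw [e3]
    have e4 : (X - C rc) * (X^2 + C rc * X + C ((1/ρ : ℝ) : ℂ)) =
        X^3 - C (rc * rc - ((1/ρ : ℝ) : ℂ)) * X - C (rc * ((1/ρ : ℝ) : ℂ)) := by
      simp only [C_sub, C_mul]
      ring
    rw [e4, hrc_sq, hrc_inv, C_1]
    unfold pf11_p3
    simp only [Polynomial.map_sub, Polynomial.map_pow, Polynomial.map_one, Polynomial.map_X]
    ring
  -- the multiset of roots
  set T : Multiset ℂ := ({lc, lc'} : Multiset ℂ) + ε • ({rc, cc, cc'} : Multiset ℂ)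
      + k • ({mc, nc} : Multiset ℂ) with hT
  set S : Multiset ℂ := pf11_xi ::ₘ pf11_xi' ::ₘ T with hS
  have hns : ∀ (j : ℕ) (s : Multiset ℂ),
      (((j • s).map fun r => (X:ℂ[X]) - C r)).prod = ((s.map fun r => X - C r)).prod ^ j := by
    intro j s
    induction j with
    | zero => simp
    | succ n ih => rw [succ_nsmul, Multiset.map_add, Multiset.prod_add, ih, pow_succ]
  have hprodS : ((S.map fun r => X - C r)).prod = (A.charpoly).map (Int.castRingHom ℂ) := by
    rw [hS, hT, hA]
    simp only [Multiset.map_cons, Multiset.prod_cons, Multiset.map_add, Multiset.prod_add, hns,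
      Multiset.insert_eq_cons, Multiset.map_singleton, Multiset.prod_singleton]
    rw [Polynomial.map_mul, Polynomial.map_mul, Polynomial.map_pow, Polynomial.map_pow]
    rw [hfact4, hfact2, hfact3]
    ring
  have hroots : ((A.charpoly).map (Int.castRingHom ℂ)).roots = S := by
    rw [← hprodS, Polynomial.roots_multiset_prod_X_sub_C]
  -- absolute values
  have habs_lc : ‖lc‖ ≠ 1 := by
    rw [hlc, Complex.norm_real, Real.norm_eq_abs, abs_of_pos (by linarith [pf11_lam_gt])]
    exact ne_of_gt pf11_lam_gt
  have habs_lc' : ‖lc'‖ ≠ 1 := by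
    obtain ⟨h1, h2⟩ := pf11_lam'_mem
    rw [hlc', Complex.norm_real, Real.norm_eq_abs, abs_of_pos h1]
    exact ne_of_lt h2
  have habs_rc : ‖rc‖ ≠ 1 := by
    rw [hrc, Complex.norm_real, Real.norm_eq_abs, abs_of_pos hρpos]
    intro h; rw [h] at hρ1; norm_num at hρ1
  have hcc_normSq : Complex.normSq cc = 1/ρ := by
    rw [hcc, Complex.normSq_add_mul_I]
    linear_combination htt2
  have hcc'_normSq : Complex.normSq cc' = 1/ρ := by
    have h : cc' = ((-ρ/2 : ℝ) : ℂ) + ((-tt : ℝ) : ℂ) * Complex.I := by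
      rw [hcc']; push_cast; ring
    rw [h, Complex.normSq_add_mul_I]
    linear_combination htt2
  have hinvρ : 1/ρ < 1 := by
    rw [div_lt_one hρpos]; linarith
  have habs_cc : ‖cc‖ ≠ 1 := by
    intro h
    have h2 := Complex.sq_norm cc
    rw [h, hcc_normSq] at h2
    norm_num at h2
    linarith
  have habs_cc' : ‖cc'‖ ≠ 1 := by
    intro h
    have h2 := Complex.sq_norm cc'
    rw [h, hcc'_normSq] at h2
    norm_num at h2
    linarith
  have hmu_gt : 1 < pf11_mu := by
    obtain ⟨h1, h2⟩ := pf11_s5_lt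
    unfold pf11_mu; linarith
  have hnu_mem : 0 < pf11_nu ∧ pf11_nu < 1 := by
    obtain ⟨h1, h2⟩ := pf11_s5_lt
    constructor <;> unfold pf11_nu <;> linarith
  have habs_mc : ‖mc‖ ≠ 1 := by
    rw [hmc, Complex.norm_real, Real.norm_eq_abs, abs_of_pos (by linarith)]
    exact ne_of_gt hmu_gt
  have habs_nc : ‖nc‖ ≠ 1 := by
    rw [hnc, Complex.norm_real, Real.norm_eq_abs, abs_of_pos hnu_mem.1]
    exact ne_of_lt hnu_mem.2
  have hTabs : ∀ z ∈ T, ‖z‖ ≠ 1 := by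
    intro z hz
    rw [hT] at hz
    rw [Multiset.mem_add] at hz
    rcases hz with hz | hz
    · rw [Multiset.mem_add] at hz
      rcases hz with hz | hz
      · simp only [Multiset.insert_eq_cons, Multiset.mem_cons, Multiset.mem_singleton] at hz
        rcases hz with rfl | rfl
        · exact habs_lc
        · exact habs_lc'
      · have hz' := Multiset.mem_of_mem_nsmul hz
        simp only [Multiset.insert_eq_cons, Multiset.mem_cons, Multiset.mem_singleton] at hz'
        rcases hz' with rfl | rfl | rfl
        · exact habs_rc
        · exact habs_cc
        · exact habs_cc'
    · have hz' := Multiset.mem_of_mem_nsmul hz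
      simp only [Multiset.insert_eq_cons, Multiset.mem_cons, Multiset.mem_singleton] at hz'
      rcases hz' with rfl | rfl
      · exact habs_mc
      · exact habs_nc
  refine ⟨A, ?_, ?_, ?_, ?_⟩
  · -- determinant
    rw [Matrix.det_eq_sign_charpoly_coeff, hA]
    have hc0 : (pf11_p4 * (pf11_p3^ε * pf11_p2^k)).coeff 0 = (-1)^ε := by
      rw [Polynomial.coeff_zero_eq_eval_zero]
      simp [pf11_p4, pf11_p3, pf11_p2]
    rw [hc0, Fintype.card_fin]
    rcases Nat.even_or_odd N with he | ho
    · have hε0 : ε = 0 := by rw [hε, Nat.even_iff.mp he]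
      rw [hε0, he.neg_one_pow]
      norm_num
    · have hε1 : ε = 1 := by rw [hε, Nat.odd_iff.mp ho]
      rw [hε1, ho.neg_one_pow]
      norm_num
  · -- no roots of unity
    intro z hz hex
    obtain ⟨m, hm, hpow⟩ := hex
    rw [hroots, hS] at hz
    rw [Multiset.mem_cons] at hz
    rcases hz with rfl | hz
    · exact pf11_xi_not_unity m hm hpow
    · rw [Multiset.mem_cons] at hz
      rcases hz with rfl | hz
      · exact pf11_xi'_not_unity m hm hpow
      · exact pf11_not_unity_of_abs_ne (hTabs z hz) m hm hpow
  · -- exactly two roots on the unit circle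
    rw [hroots, hS, Multiset.filter_cons, Multiset.filter_cons,
      Multiset.filter_eq_nil.mpr hTabs]
    simp [pf11_xi_abs, pf11_xi'_abs]
  · -- reducible
    rw [hA]
    intro hirr
    have hq : (pf11_p3^ε * pf11_p2^k).natDegree = 3*ε + 2*k := by
      rw [Polynomial.Monic.natDegree_mul (hm3.pow ε) (hm2.pow k),
        Polynomial.natDegree_pow, Polynomial.natDegree_pow, hd2, hd3]
      ring
    rcases hirr.isUnit_or_isUnit rfl with h | h
    · have := Polynomial.natDegree_eq_zero_of_isUnit h
      rw [hd4] at this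
      omega
    · have := Polynomial.natDegree_eq_zero_of_isUnit h
      rw [hq] at this
      omega
end

section
/- Let V be a real normed vector space, let x ∈ V, let 0 < ρ ≤ r, and let z₁, …, z_m and w₁, …, w_m be points of V with ‖wᵢ − zᵢ‖ ≤ ρ for every i. If the closed ball of center x and radius r is contained in the convex hull of {z₁, …, z_m}, then the closed ball of center x and radius r − ρ is contained in the convex hull of {w₁, …, w_m}. -/
theorem stmt_15 {V : Type*} [NormedAddCommGroup V] [NormedSpace ℝ V]
    (x : V) (ρ r : ℝ) (hρ : 0 < ρ) (hρr : ρ ≤ r) (m : ℕ)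
    (z w : Fin m → V) (hzw : ∀ i, ‖w i - z i‖ ≤ ρ)
    (hball : Metric.closedBall x r ⊆ convexHull ℝ (Set.range z)) :
    Metric.closedBall x (r - ρ) ⊆ convexHull ℝ (Set.range w) := by
  intro y hy
  by_contra hyC
  have hr : 0 < r := lt_of_lt_of_le hρ hρr
  have hcomp : IsCompact (convexHull ℝ (Set.range w)) :=
    (Set.finite_range w).isCompact_convexHull (𝕜 := ℝ)
  obtain ⟨f, u, hC, hyu⟩ :=
    geometric_hahn_banach_closed_point (convex_convexHull ℝ _) hcomp.isClosed hyC
  -- every point of hull z has f-value ≤ u + ρ * ‖f‖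
  have hz : ∀ p ∈ convexHull ℝ (Set.range z), f p ≤ u + ρ * ‖f‖ := by
    intro p hp
    have hsub : convexHull ℝ (Set.range z) ⊆ {p | f p ≤ u + ρ * ‖f‖} := by
      apply convexHull_min
      · rintro _ ⟨i, rfl⟩
        have h1 : f (z i) = f (w i) + f (z i - w i) := by
          rw [← map_add]; congr 1; abel
        have h2 : f (z i - w i) ≤ ρ * ‖f‖ := by
          calc f (z i - w i) ≤ ‖f (z i - w i)‖ := le_abs_self _
            _ ≤ ‖f‖ * ‖z i - w i‖ := f.le_opNorm _
            _ ≤ ‖f‖ * ρ := by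
                have := hzw i
                rw [← norm_neg, neg_sub] at this
                exact mul_le_mul_of_nonneg_left this (norm_nonneg f)
            _ = ρ * ‖f‖ := mul_comm _ _
        have h3 : f (w i) ≤ u := le_of_lt (hC _ (subset_convexHull ℝ _ ⟨i, rfl⟩))
        simp only [Set.mem_setOf_eq, h1]
        linarith
      · exact convex_halfSpace_le (f.toLinearMap.isLinear) _
    exact hsub hp
  -- bound the operator norm
  set C : ℝ := u + ρ * ‖f‖ - f x with hCdef
  have hC0 : 0 ≤ C := by
    have := hz x (hball (Metric.mem_closedBall_self (le_of_lt hr)))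
    linarith
  have hbound : ∀ v : V, ‖v‖ ≤ r → ‖f v‖ ≤ C := by
    intro v hv'
    have h1 : f (x + v) ≤ u + ρ * ‖f‖ := by
      apply hz
      apply hball
      simp [Metric.mem_closedBall, dist_eq_norm, hv']
    have h2 : f (x - v) ≤ u + ρ * ‖f‖ := by
      apply hz
      apply hball
      simp only [Metric.mem_closedBall, dist_eq_norm]
      simpa using hv'
    rw [map_add] at h1
    rw [map_sub] at h2
    rw [Real.norm_eq_abs, abs_le]
    constructor <;> linarith
  have hnorm : ‖f‖ ≤ C / r := by
    apply ContinuousLinearMap.opNorm_le_bound f (div_nonneg hC0 hr.le)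
    intro v
    rcases eq_or_ne v 0 with rfl | hv0
    · simp
    · have hnv : 0 < ‖v‖ := norm_pos_iff.2 hv0
      have hsc : ‖(r / ‖v‖) • v‖ ≤ r := by
        rw [norm_smul, Real.norm_eq_abs, abs_of_pos (div_pos hr hnv),
          div_mul_cancel₀ _ (ne_of_gt hnv)]
      have := hbound _ hsc
      rw [map_smul, norm_smul, Real.norm_eq_abs, abs_of_pos (div_pos hr hnv)] at this
      have h5 : r * ‖f v‖ ≤ C * ‖v‖ := (div_le_iff₀ hnv).mp (by rw [div_mul_eq_mul_div] at this; exact this)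
      rw [div_mul_eq_mul_div, le_div_iff₀ hr]
      linarith
  have hrf : r * ‖f‖ ≤ C := by
    have := mul_le_mul_of_nonneg_left hnorm (le_of_lt hr)
    rwa [mul_div_cancel₀ _ (ne_of_gt hr)] at this
  have hfy : f y ≤ f x + (r - ρ) * ‖f‖ := by
    have h1 : f y - f x = f (y - x) := (map_sub f y x).symm
    have h2 : f (y - x) ≤ ‖f‖ * ‖y - x‖ :=
      le_trans (le_abs_self _) (f.le_opNorm _)
    have h3 : ‖y - x‖ ≤ r - ρ := by
      rw [Metric.mem_closedBall, dist_eq_norm] at hy; exact hy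
    have h4 : ‖f‖ * ‖y - x‖ ≤ ‖f‖ * (r - ρ) :=
      mul_le_mul_of_nonneg_left h3 (norm_nonneg f)
    nlinarith
  have : f y ≤ u := by simp only [hCdef] at hrf; nlinarith
  linarith
end
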